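/- arXiv:0705.0034 — 6 statements merged into one kernel-verified Lean document; each statement's English description precedes it below -/
import Mathlib

section
/- Let X be a compact metric space and Γ a finitely generated group acting minimally on X by homeomorphisms, with a continuous real-valued cocycle c : Γ × X → ℝ satisfying c(fg, x) = c(g, x) + c(f, g·x). If there exists a point x₀ ∈ X and a constant C > 0 such that |c(f, x₀)| ≤ C for all f ∈ Γ, then there exists a continuous function φ : X → ℝ such that c(f, x) = φ(f·x) − φ(x) for all f ∈ Γ and x ∈ X. -/
open Set

/-- **Gottschalk–Hedlund lemma for group actions (i) ⇒ (ii).**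
If a finitely generated group `Γ` acts minimally by homeomorphisms on a compact metric
space `X`, `c` is a continuous cocycle, and the orbit of the cocycle at some point `x₀`
is bounded by a constant `C > 0`, then `c` is a continuous coboundary. -/
theorem stmt0 {Γ X : Type*} [Group Γ] [Group.FG Γ] [MetricSpace X] [CompactSpace X]
    [MulAction Γ X] [ContinuousConstSMul Γ X]
    (hmin : ∀ x : X, Dense (MulAction.orbit Γ x))
    (c : Γ → X → ℝ) (hc : ∀ f : Γ, Continuous (c f))
    (hcoc : ∀ f g : Γ, ∀ x : X, c (f * g) x = c g x + c f (g • x))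
    (x₀ : X) (C : ℝ) (hC : 0 < C) (hb : ∀ f : Γ, |c f x₀| ≤ C) :
    ∃ φ : X → ℝ, Continuous φ ∧ ∀ f : Γ, ∀ x : X, c f x = φ (f • x) - φ x := by
  -- `c 1 x = 0`
  have h1 : ∀ x : X, c 1 x = 0 := by
    intro x
    have := hcoc 1 1 x
    simp only [one_mul, one_smul] at this
    linarith
  -- a closed set containing a full orbit is everything
  have closed_orbit : ∀ (S : Set X), IsClosed S → (∃ y : X, ∀ g : Γ, g • y ∈ S) →
      ∀ x, x ∈ S := by
    rintro S hS ⟨y, hy⟩ x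
    have hd : Dense S := (hmin y).mono (by rintro _ ⟨g, rfl⟩; exact hy g)
    have : S = univ := hS.closure_eq ▸ hd.closure_eq
    simp [this]
  -- the cocycle is uniformly bounded by `2C`
  have h2C : ∀ f : Γ, ∀ x : X, |c f x| ≤ 2 * C := by
    intro f
    apply closed_orbit
    · exact isClosed_le ((hc f).abs) continuous_const
    · refine ⟨x₀, fun g => ?_⟩
      have h := hcoc f g x₀
      have heq : c f (g • x₀) = c (f * g) x₀ - c g x₀ := by linarith
      show |c f (g • x₀)| ≤ 2 * C
      rw [heq]
      calc |c (f * g) x₀ - c g x₀| ≤ |c (f * g) x₀| + |c g x₀| := abs_sub _ _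
        _ ≤ 2 * C := by linarith [hb (f * g), hb g]
  have bddA : ∀ x : X, BddAbove (range fun f : Γ => c f x) := by
    intro x
    exact ⟨2 * C, by rintro _ ⟨f, rfl⟩; exact (abs_le.1 (h2C f x)).2⟩
  have bddB : ∀ x : X, BddBelow (range fun f : Γ => c f x) := by
    intro x
    exact ⟨-(2 * C), by rintro _ ⟨f, rfl⟩; exact (abs_le.1 (h2C f x)).1⟩
  set ψ : X → ℝ := fun x => ⨆ f : Γ, c f x with hψdef
  set χ : X → ℝ := fun x => ⨅ f : Γ, c f x with hχdef
  -- the key translation identities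
  have hrelψ : ∀ (g : Γ) (x : X), ψ (g • x) = ψ x - c g x := by
    intro g x
    apply le_antisymm
    · apply ciSup_le
      intro f
      have h := hcoc f g x
      have heq : c f (g • x) = c (f * g) x - c g x := by linarith
      rw [heq]
      linarith [le_ciSup (bddA x) (f * g)]
    · rw [sub_le_iff_le_add]
      apply ciSup_le
      intro h
      have hco := hcoc (h * g⁻¹) g x
      have hhg : h * g⁻¹ * g = h := by group
      rw [hhg] at hco
      linarith [le_ciSup (bddA (g • x)) (h * g⁻¹)]
  have hrelχ : ∀ (g : Γ) (x : X), χ (g • x) = χ x - c g x := by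
    intro g x
    apply le_antisymm
    · have key : χ (g • x) + c g x ≤ χ x := by
        apply le_ciInf
        intro h
        have hco := hcoc (h * g⁻¹) g x
        have hhg : h * g⁻¹ * g = h := by group
        rw [hhg] at hco
        linarith [ciInf_le (bddB (g • x)) (h * g⁻¹)]
      linarith
    · apply le_ciInf
      intro f
      have h := hcoc f g x
      have heq : c f (g • x) = c (f * g) x - c g x := by linarith
      rw [heq]
      linarith [ciInf_le (bddB x) (f * g)]
  set δ : X → ℝ := fun x => ψ x - χ x with hδdef
  have hδinv : ∀ (g : Γ) (x : X), δ (g • x) = δ x := by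
    intro g x
    simp only [hδdef, hrelψ, hrelχ]
    ring
  have hδ0 : ∀ x : X, 0 ≤ δ x := by
    intro x
    have h₁ : χ x ≤ c 1 x := ciInf_le (bddB x) (1 : Γ)
    have h₂ : c 1 x ≤ ψ x := le_ciSup (bddA x) (1 : Γ)
    show 0 ≤ ψ x - χ x
    linarith [h1 x]
  have hψlsc : LowerSemicontinuous ψ :=
    lowerSemicontinuous_ciSup bddA fun f => (hc f).lowerSemicontinuous
  have hχusc : UpperSemicontinuous χ :=
    upperSemicontinuous_ciInf bddB fun f => (hc f).upperSemicontinuous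
  have hnegχ : LowerSemicontinuous (fun x => -χ x) :=
    continuous_neg.comp_upperSemicontinuous_antitone hχusc fun _ _ h => neg_le_neg h
  have hδlsc : LowerSemicontinuous δ := by
    have := hψlsc.add hnegχ
    simpa [hδdef, sub_eq_add_neg] using this
  have hconst : ∀ x y : X, δ x ≤ δ y := by
    intro x y
    have hx : x ∈ δ ⁻¹' Iic (δ y) := by
      apply closed_orbit
      · exact hδlsc.isClosed_preimage _
      · exact ⟨y, fun g => by simp [Set.mem_preimage, Set.mem_Iic, hδinv g y]⟩
    simpa using hx
  have hψeq : ψ = fun x => χ x + δ x₀ := by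
    funext x
    have h₁ := hconst x x₀
    have h₂ := hconst x₀ x
    show ψ x = χ x + δ x₀
    simp only [hδdef] at h₁ h₂ ⊢
    linarith
  have hψusc : UpperSemicontinuous ψ := by
    rw [hψeq]
    exact hχusc.add continuous_const.upperSemicontinuous
  have hψcont : Continuous ψ := continuous_iff_lower_upperSemicontinuous.2 ⟨hψlsc, hψusc⟩
  refine ⟨fun x => -ψ x, hψcont.neg, fun f x => ?_⟩
  show c f x = -ψ (f • x) - -ψ x
  rw [hrelψ]
  ring
end

section
/- Let Γ act minimally by homeomorphisms on a compact metric space X, let c be a continuous cocycle, and let Γ act on X × ℝ by f̂(x, t) = (f·x, t + c(f, x)). If M ⊆ X × ℝ is a nonempty compact set that is invariant and minimal for this action (i.e., contains no proper nonempty compact invariant subset), then M is the graph of a continuous function φ : X → ℝ, and c(f, x) = φ(f·x) − φ(x) for all f ∈ Γ and x ∈ X. -/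
/-!
The projection of `M` to `X` is a nonempty compact invariant set, hence all of `X` by
minimality. If a fibre of `M` contained two heights `s > t`, then `M` and its vertical
translate by `t - s` would meet in a nonempty compact invariant subset (the skew product
commutes with vertical translations), so by minimality `M` would be invariant under the
translation by `t - s < 0`; iterating it contradicts boundedness of `M`. Hence `M` is the
graph of a function `φ`, continuous because its graph is compact, and invariance of the graph
reads `φ (f • x) = φ x + c f x`.
-/

open Set MulAction
open scoped Pointwise

def skewMap {Γ X : Type*} [SMul Γ X] (c : Γ → X → ℝ) (f : Γ) (p : X × ℝ) : X × ℝ :=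
  (f • p.1, p.2 + c f p.1)

def verticalShift {X : Type*} (a : ℝ) (p : X × ℝ) : X × ℝ :=
  (p.1, p.2 + a)

lemma skewMap_verticalShift {Γ X : Type*} [SMul Γ X] (c : Γ → X → ℝ) (f : Γ) (a : ℝ)
    (p : X × ℝ) : skewMap c f (verticalShift a p) = verticalShift a (skewMap c f p) := by
  simp only [skewMap, verticalShift, Prod.mk.injEq, true_and]
  ring

lemma nonneg_of_bddBelow_of_add_mem {S : Set ℝ} (hbdd : BddBelow S) (hne : S.Nonempty) {a : ℝ}
    (hadd : ∀ y ∈ S, y + a ∈ S) : 0 ≤ a := by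
  by_contra! ha
  obtain ⟨b, hb⟩ := hbdd
  obtain ⟨s, hs⟩ := hne
  have hiter : ∀ n : ℕ, s + n * a ∈ S := by
    intro n
    induction n with
    | zero => simpa using hs
    | succ k ih => simpa [add_mul, add_assoc] using hadd _ ih
  obtain ⟨n, hn⟩ := exists_nat_gt ((s - b) / -a)
  have hlt : s + n * a < b := by
    rw [div_lt_iff₀ (neg_pos.2 ha)] at hn
    linarith
  exact hlt.not_ge (hb (hiter n))

lemma continuous_of_isCompact_graph {X Y : Type*} [TopologicalSpace X] [T2Space X]
    [TopologicalSpace Y] {φ : X → Y} (h : IsCompact {p : X × Y | p.2 = φ p.1}) :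
    Continuous φ := by
  refine continuous_iff_isClosed.2 fun C hC => ?_
  have hpre : φ ⁻¹' C = Prod.fst '' ({p : X × Y | p.2 = φ p.1} ∩ Prod.snd ⁻¹' C) := by
    ext x
    simp
  rw [hpre]
  exact ((h.inter_right (hC.preimage continuous_snd)).image continuous_fst).isClosed

lemma exists_eq_graph_of_fst_image_eq_univ {X Y : Type*} {M : Set (X × Y)}
    (hfst : Prod.fst '' M = univ) (huniq : ∀ x y y', (x, y) ∈ M → (x, y') ∈ M → y = y') :
    ∃ φ : X → Y, M = {p : X × Y | p.2 = φ p.1} := by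
  have hsurj : ∀ x, ∃ y, (x, y) ∈ M := fun x => by
    obtain ⟨p, hp, rfl⟩ := hfst.symm ▸ mem_univ x
    exact ⟨p.2, hp⟩
  choose φ hφ using hsurj
  refine ⟨φ, ext fun p => ⟨fun hp => huniq p.1 _ _ hp (hφ p.1), fun hp => ?_⟩⟩
  rw [← Prod.mk.eta (p := p), show p.2 = φ p.1 from hp]
  exact hφ p.1

section SkewProduct

variable {Γ X : Type*} [TopologicalSpace X] [T2Space X] {c : Γ → X → ℝ} {M : Set (X × ℝ)}

lemma fst_image_eq_univ_of_skewMap_invariant [Monoid Γ] [MulAction Γ X] [IsMinimal Γ X]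
    (hM : IsCompact M) (hne : M.Nonempty) (hinv : ∀ f, skewMap c f '' M ⊆ M) :
    Prod.fst '' M = univ := by
  have hsmul : ∀ f : Γ, f • (Prod.fst '' M) ⊆ Prod.fst '' M := by
    rintro f _ ⟨_, ⟨p, hp, rfl⟩, rfl⟩
    exact ⟨skewMap c f p, hinv f ⟨p, hp, rfl⟩, rfl⟩
  exact (eq_empty_or_univ_of_smul_invariant_closed Γ (hM.image continuous_fst).isClosed
    hsmul).resolve_left (hne.image _).ne_empty

variable [SMul Γ X] (hM : IsCompact M) (hinv : ∀ f, skewMap c f '' M ⊆ M)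
  (hmin : ∀ M' ⊆ M, M'.Nonempty → IsCompact M' → (∀ f, skewMap c f '' M' ⊆ M') → M' = M)
include hM hinv hmin

lemma verticalShift_mem_of_minimal {x : X} {s t : ℝ} (hs : (x, s) ∈ M)
    (ht : (x, t) ∈ M) {p : X × ℝ} (hp : p ∈ M) : verticalShift (s - t) p ∈ M := by
  set M' := M ∩ verticalShift (s - t) ⁻¹' M
  have hM'inv : ∀ f, skewMap c f '' M' ⊆ M' := by
    rintro f _ ⟨q, ⟨hqM, hqs⟩, rfl⟩
    refine ⟨hinv f ⟨q, hqM, rfl⟩, ?_⟩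
    rw [mem_preimage, ← skewMap_verticalShift]
    exact hinv f ⟨_, hqs, rfl⟩
  have hM'ne : M'.Nonempty := ⟨(x, t), ht, by simpa [verticalShift] using hs⟩
  have hM'comp : IsCompact M' :=
    hM.inter_right (hM.isClosed.preimage (by unfold verticalShift; fun_prop))
  rw [← hmin M' inter_subset_left hM'ne hM'comp hM'inv] at hp
  exact hp.2

lemma eq_of_mem_of_minimal {x : X} {s t : ℝ} (hs : (x, s) ∈ M) (ht : (x, t) ∈ M) : s = t := by
  have hle : ∀ {s t : ℝ}, (x, s) ∈ M → (x, t) ∈ M → t ≤ s := fun hs ht =>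
    sub_nonneg.1 <| nonneg_of_bddBelow_of_add_mem (hM.image continuous_snd).bddBelow
      ⟨_, _, hs, rfl⟩ <| by
        rintro _ ⟨p, hp, rfl⟩
        exact ⟨_, verticalShift_mem_of_minimal hM hinv hmin hs ht hp, rfl⟩
  exact le_antisymm (hle ht hs) (hle hs ht)

end SkewProduct

theorem stmt3_general {Γ X : Type*} [Group Γ] [MetricSpace X]
    [MulAction Γ X]
    (hmin : ∀ x : X, Dense (MulAction.orbit Γ x))
    (c : Γ → X → ℝ)
    (M : Set (X × ℝ)) (hMne : M.Nonempty) (hMcomp : IsCompact M)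
    (hMinv : ∀ f : Γ, (fun p : X × ℝ => (f • p.1, p.2 + c f p.1)) '' M ⊆ M)
    (hMmin : ∀ M' : Set (X × ℝ), M' ⊆ M → M'.Nonempty → IsCompact M' →
      (∀ f : Γ, (fun p : X × ℝ => (f • p.1, p.2 + c f p.1)) '' M' ⊆ M') → M' = M) :
    ∃ φ : X → ℝ, Continuous φ ∧ M = {p : X × ℝ | p.2 = φ p.1} ∧
      ∀ f : Γ, ∀ x : X, c f x = φ (f • x) - φ x := by
  have : IsMinimal Γ X := ⟨hmin⟩
  obtain ⟨φ, rfl⟩ := exists_eq_graph_of_fst_image_eq_univ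
    (fst_image_eq_univ_of_skewMap_invariant (c := c) hMcomp hMne hMinv)
    fun _ _ _ => eq_of_mem_of_minimal hMcomp hMinv hMmin
  refine ⟨φ, continuous_of_isCompact_graph hMcomp, rfl, fun f x => ?_⟩
  have hφ : φ x + c f x = φ (f • x) := hMinv f ⟨(x, φ x), rfl, rfl⟩
  linarith

/-- A minimal nonempty compact invariant set `M` for the skew-product action
`f̂(x,t) = (f • x, t + c(f,x))` over a minimal action on a compact metric space is the
graph of a continuous function `φ`, and `c` is the coboundary of `φ`. -/
theorem stmt3 {Γ X : Type*} [Group Γ] [MetricSpace X] [CompactSpace X]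
    [MulAction Γ X] [ContinuousConstSMul Γ X]
    (hmin : ∀ x : X, Dense (MulAction.orbit Γ x))
    (c : Γ → X → ℝ) (hc : ∀ f : Γ, Continuous (c f))
    (hcoc : ∀ f g : Γ, ∀ x : X, c (f * g) x = c g x + c f (g • x))
    (M : Set (X × ℝ)) (hMne : M.Nonempty) (hMcomp : IsCompact M)
    (hMinv : ∀ f : Γ, (fun p : X × ℝ => (f • p.1, p.2 + c f p.1)) '' M ⊆ M)
    (hMmin : ∀ M' : Set (X × ℝ), M' ⊆ M → M'.Nonempty → IsCompact M' →
      (∀ f : Γ, (fun p : X × ℝ => (f • p.1, p.2 + c f p.1)) '' M' ⊆ M') → M' = M) :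
    ∃ φ : X → ℝ, Continuous φ ∧ M = {p : X × ℝ | p.2 = φ p.1} ∧
      ∀ f : Γ, ∀ x : X, c f x = φ (f • x) - φ x :=
  stmt3_general hmin c M hMne hMcomp hMinv hMmin
end

section
/- Let Γ act minimally by homeomorphisms on a compact metric space X and let c be a continuous cocycle. Suppose the action preserves a Borel probability measure μ and is μ-ergodic, and suppose φ ∈ L^∞(μ) satisfies c(f, x) = φ(f·x) − φ(x) for every f ∈ Γ and μ-almost every x. Then there exists a continuous function φ̃ : X → ℝ, equal to φ μ-almost everywhere, such that c(f, x) = φ̃(f·x) − φ̃(x) holds for all f ∈ Γ and all x ∈ X. -/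
/-!
Pushing `μ` forward along the graph of `φ` gives a probability measure `ν` on `X × ℝ` which,
by the cohomological equation, is invariant under the skew products
`(x, t) ↦ (g • x, t + c g x)`. Its support `S` is a nonempty compact skew-invariant set; its
projection to `X` is closed and invariant, hence all of `X` by minimality. The upper and lower
envelopes of the fibres of `S` solve the cohomological equation everywhere; the first is upper,
the second lower semicontinuous, and their difference is an invariant upper semicontinuous
function, hence constant by minimality. So the upper envelope `M` is continuous, and `φ - M`
is a.e. invariant, hence a.e. constant by ergodicity, `Γ` being countable.
-/

open MeasureTheory Set Filter

section Cocycle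

variable {Γ X A : Type*} [Group Γ] [MulAction Γ X] [AddCommGroup A]

def IsCocycle (c : Γ → X → A) : Prop :=
  ∀ f g x, c (f * g) x = c g x + c f (g • x)

variable {c : Γ → X → A}

theorem IsCocycle.map_one (hc : IsCocycle c) (x : X) : c 1 x = 0 := by
  simpa using hc 1 1 x

theorem IsCocycle.map_inv_smul (hc : IsCocycle c) (g : Γ) (x : X) :
    c g⁻¹ (g • x) = -c g x := by
  have h := hc g⁻¹ g x
  rw [inv_mul_cancel, hc.map_one] at h
  exact eq_neg_of_add_eq_zero_right h.symm

theorem IsCocycle.neg (hc : IsCocycle c) : IsCocycle (-c) := fun f g x => by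
  simp only [Pi.neg_apply, hc f g x, neg_add]

end Cocycle

def skewProduct {Γ X : Type*} [SMul Γ X] (c : Γ → X → ℝ) (g : Γ) (p : X × ℝ) : X × ℝ :=
  (g • p.1, p.2 + c g p.1)

theorem mapsTo_skewProduct_neg {Γ X : Type*} [SMul Γ X] {c : Γ → X → ℝ} {S : Set (X × ℝ)}
    (hSinv : ∀ g, MapsTo (skewProduct c g) S S) (g : Γ) :
    MapsTo (skewProduct (-c) g) (Prod.map id Neg.neg '' S) (Prod.map id Neg.neg '' S) := by
  rintro _ ⟨p, hp, rfl⟩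
  exact ⟨skewProduct c g p, hSinv g hp, by simp [skewProduct, add_comm]⟩

theorem continuous_skewProduct {Γ X : Type*} [TopologicalSpace X] [SMul Γ X]
    [ContinuousConstSMul Γ X] {c : Γ → X → ℝ} {g : Γ} (hc : Continuous (c g)) :
    Continuous (skewProduct c g) :=
  (continuous_fst.const_smul g).prodMk (continuous_snd.add (hc.comp continuous_fst))

noncomputable def fiberSup {X : Type*} (S : Set (X × ℝ)) (x : X) : ℝ :=
  sSup (Prod.mk x ⁻¹' S)

section Fiber

variable {X : Type*} [TopologicalSpace X] {S : Set (X × ℝ)}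

theorem bddAbove_fiber (hS : IsCompact S) (x : X) : BddAbove (Prod.mk x ⁻¹' S) :=
  (hS.image continuous_snd).bddAbove.mono fun _ ht => mem_image_of_mem Prod.snd ht

theorem le_fiberSup (hS : IsCompact S) {x : X} {t : ℝ} (h : (x, t) ∈ S) : t ≤ fiberSup S x :=
  le_csSup (bddAbove_fiber hS x) h

variable [T2Space X]

theorem fiberSup_mem (hS : IsCompact S) {x : X} (hx : x ∈ Prod.fst '' S) :
    (x, fiberSup S x) ∈ S := by
  obtain ⟨p, hp, rfl⟩ := hx
  exact (hS.isClosed.preimage (Continuous.prodMk_right p.1)).csSup_mem ⟨p.2, hp⟩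
    (bddAbove_fiber hS p.1)

theorem upperSemicontinuous_fiberSup (hS : IsCompact S) (hfst : Prod.fst '' S = univ) :
    UpperSemicontinuous (fiberSup S) := by
  refine upperSemicontinuous_iff_isClosed_preimage.mpr fun r => ?_
  have : fiberSup S ⁻¹' Ici r = Prod.fst '' (S ∩ Prod.snd ⁻¹' Ici r) := by
    ext x
    refine ⟨fun hx => ⟨(x, fiberSup S x), ⟨fiberSup_mem hS (hfst ▸ mem_univ x), hx⟩, rfl⟩, ?_⟩
    rintro ⟨p, ⟨hp, hpr⟩, rfl⟩
    exact hpr.trans (le_fiberSup hS hp)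
  rw [this]
  exact ((hS.inter_right (isClosed_Ici.preimage continuous_snd)).image continuous_fst).isClosed

end Fiber

section Minimal

variable {Γ X : Type*} [Group Γ] [TopologicalSpace X] [MulAction Γ X] [MulAction.IsMinimal Γ X]

theorem eq_of_upperSemicontinuous_of_smul_eq {β : Type*} [LinearOrder β] {h : X → β}
    (hh : UpperSemicontinuous h) (hinv : ∀ (g : Γ) x, h (g • x) = h x) (x y : X) :
    h x = h y := by
  suffices key : ∀ x y, h x ≤ h y from le_antisymm (key x y) (key y x)
  intro x y
  have huniv : h ⁻¹' Ici (h x) = univ :=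
    (eq_empty_or_univ_of_smul_invariant_closed Γ (hh.isClosed_preimage (h x)) ?_).resolve_left
      (nonempty_of_mem (show x ∈ h ⁻¹' Ici (h x) from le_rfl)).ne_empty
  · exact eq_univ_iff_forall.mp huniv y
  · rintro g _ ⟨z, hz, rfl⟩
    simpa [hinv] using hz

variable [T2Space X] {S : Set (X × ℝ)} {c : Γ → X → ℝ}

theorem fst_image_eq_univ (hS : IsCompact S) (hne : S.Nonempty)
    (hSinv : ∀ g, MapsTo (skewProduct c g) S S) : Prod.fst '' S = univ := by
  refine (eq_empty_or_univ_of_smul_invariant_closed Γ (hS.image continuous_fst).isClosed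
    ?_).resolve_left (hne.image _).ne_empty
  rintro g _ ⟨_, ⟨p, hp, rfl⟩, rfl⟩
  exact ⟨_, hSinv g hp, rfl⟩

end Minimal

section SkewInvariant

variable {Γ X : Type*} [Group Γ] [TopologicalSpace X] [T2Space X] [MulAction Γ X]
  {S : Set (X × ℝ)} {c : Γ → X → ℝ}

theorem fiberSup_smul (hc : IsCocycle c) (hS : IsCompact S) (hfst : Prod.fst '' S = univ)
    (hSinv : ∀ g, MapsTo (skewProduct c g) S S) (g : Γ) (x : X) :
    fiberSup S (g • x) = fiberSup S x + c g x := by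
  have key : ∀ (g : Γ) x, fiberSup S x + c g x ≤ fiberSup S (g • x) := fun g x =>
    le_fiberSup hS (hSinv g (fiberSup_mem hS (hfst ▸ mem_univ x)))
  have h := key g⁻¹ (g • x)
  rw [inv_smul_smul, hc.map_inv_smul] at h
  exact le_antisymm (by linarith) (key g x)

variable [MulAction.IsMinimal Γ X]

theorem exists_continuous_coboundary_of_mapsTo_skewProduct (hc : IsCocycle c)
    (hS : IsCompact S) (hne : S.Nonempty) (hSinv : ∀ g, MapsTo (skewProduct c g) S S) :
    ∃ M : X → ℝ, Continuous M ∧ ∀ g x, c g x = M (g • x) - M x := by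
  set S' := Prod.map id Neg.neg '' S
  have hS' : IsCompact S' := hS.image (continuous_id.prodMap continuous_neg)
  have hS'inv := mapsTo_skewProduct_neg hSinv
  have hfst := fst_image_eq_univ hS hne hSinv
  have hfst' := fst_image_eq_univ hS' (hne.image _) hS'inv
  have hM := fiberSup_smul hc hS hfst hSinv
  have hM' := fiberSup_smul hc.neg hS' hfst' hS'inv
  have husc := upperSemicontinuous_fiberSup hS hfst
  have husc' := upperSemicontinuous_fiberSup hS' hfst'
  obtain ⟨x₀, -⟩ := hne.image Prod.fst
  -- `fiberSup S'` is minus the lower envelope of `S`, so the sum is the width of the fibres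
  have hwidth : ∀ (g : Γ) x,
      fiberSup S (g • x) + fiberSup S' (g • x) = fiberSup S x + fiberSup S' x := fun g x => by
    rw [hM, hM', Pi.neg_apply, Pi.neg_apply]
    ring
  have hsum : ∀ x, fiberSup S x = (fiberSup S x₀ + fiberSup S' x₀) - fiberSup S' x := fun x => by
    linarith [eq_of_upperSemicontinuous_of_smul_eq (husc.add husc') hwidth x x₀]
  refine ⟨fiberSup S, continuous_iff_lower_upperSemicontinuous.mpr ⟨?_, husc⟩,
    fun g x => by rw [hM]; ring⟩
  rw [funext hsum]
  exact continuous_sub_left _ |>.comp_upperSemicontinuous_antitone husc' fun a b h => by linarith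

end SkewInvariant

theorem MeasureTheory.Measure.mapsTo_support_map {X Y : Type*} [TopologicalSpace X]
    [MeasurableSpace X] [TopologicalSpace Y] [MeasurableSpace Y] {μ : Measure X} {f : X → Y}
    (hf : Continuous f) (hfm : AEMeasurable f μ) : MapsTo f μ.support (μ.map f).support := by
  intro x hx
  rw [Measure.mem_support_iff_forall] at hx ⊢
  exact fun U hU => (hx _ (hf.continuousAt.preimage_mem_nhds hU)).trans_le (le_map_apply hfm U)

section Graph

variable {Γ X : Type*} [Group Γ] [MulAction Γ X] [TopologicalSpace X] [MeasurableSpace X]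
  [BorelSpace X] [ContinuousConstSMul Γ X] {μ : Measure X} {φ : X → ℝ} {c : Γ → X → ℝ} {g : Γ}

theorem measurable_skewProduct (hc : Continuous (c g)) : Measurable (skewProduct c g) :=
  ((continuous_const_smul g).measurable.comp measurable_fst).prodMk
    (measurable_snd.add (hc.measurable.comp measurable_fst))

theorem map_skewProduct_map_graph (hφ : Measurable φ) (hc : Continuous (c g))
    (hg : MeasurePreserving (g • ·) μ μ) (hrel : ∀ᵐ x ∂μ, c g x = φ (g • x) - φ x) :
    (μ.map fun x => (x, φ x)).map (skewProduct c g) = μ.map fun x => (x, φ x) := by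
  have hgraph : Measurable fun x => (x, φ x) := measurable_id.prodMk hφ
  have hae : skewProduct c g ∘ (fun x => (x, φ x)) =ᵐ[μ] (fun x => (x, φ x)) ∘ (g • ·) := by
    filter_upwards [hrel] with x hx
    simp [skewProduct, hx]
  rw [Measure.map_map (measurable_skewProduct hc) hgraph, Measure.map_congr hae,
    ← Measure.map_map hgraph hg.measurable, hg.map_eq]

theorem isCompact_support_map_graph [CompactSpace X] [SecondCountableTopology X]
    (hφ : Measurable φ) {K : ℝ} (hK : ∀ᵐ x ∂μ, |φ x| ≤ K) :
    IsCompact (μ.map fun x => (x, φ x)).support := by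
  have hbox : IsClosed (univ ×ˢ Icc (-K) K : Set (X × ℝ)) := isClosed_univ.prod isClosed_Icc
  refine (isCompact_univ.prod isCompact_Icc).of_isClosed_subset Measure.isClosed_support
    (Measure.support_subset_of_isClosed hbox ?_)
  have hgraph : Measurable fun x => (x, φ x) := measurable_id.prodMk hφ
  rw [mem_ae_map_iff hgraph.aemeasurable hbox.measurableSet]
  filter_upwards [hK] with x hx
  exact ⟨mem_univ x, abs_le.mp hx⟩

end Graph

theorem Group.FG.countable (Γ : Type*) [Group Γ] [Group.FG Γ] : Countable Γ := by
  obtain ⟨α, _, φ, hφ⟩ := Group.fg_iff_exists_freeGroup_hom_surjective_finite.mp ‹Group.FG Γ›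
  exact hφ.countable

theorem ErgodicSMul.of_forall_preimage_smul_eq {G α : Type*} [Group G] [Countable G]
    [MulAction G α] [MeasurableSpace α] [MeasurableConstSMul G α] {μ : Measure α}
    [IsProbabilityMeasure μ] [SMulInvariantMeasure G α μ]
    (h : ∀ s, MeasurableSet s → (∀ g : G, (g • ·) ⁻¹' s = s) → μ s = 0 ∨ μ s = 1) :
    ErgodicSMul G α μ where
  aeconst_of_forall_preimage_smul_ae_eq {s} hs hae := by
    set B := ⋂ g : G, (g • ·) ⁻¹' s
    have hBm : MeasurableSet B := .iInter fun g => hs.preimage (measurable_const_smul g)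
    have hBinv : ∀ g₀ : G, (g₀ • ·) ⁻¹' B = B := fun g₀ => by
      ext x
      simp only [B, mem_preimage, mem_iInter, smul_smul]
      exact (Equiv.mulRight g₀).forall_congr_right (q := fun g => g • x ∈ s)
    have hBs : B =ᵐ[μ] s := by
      simpa only [B, iInter_const] using Filter.EventuallyEq.countable_iInter hae
    refine (eventuallyConst_set'.mpr ?_).congr hBs
    rw [ae_eq_empty, ae_eq_univ, prob_compl_eq_zero_iff hBm]
    exact h B hBm hBinv

theorem ErgodicSMul.exists_ae_eq_const_of_ae_eq_comp_smul {G α β : Type*} [SMul G α]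
    [MeasurableSpace α] {μ : Measure α} [ErgodicSMul G α μ] [MeasurableSpace β]
    [MeasurableSpace.CountablySeparated β] [Nonempty β] {f : α → β} (hf : Measurable f)
    (h : ∀ g : G, f ∘ (g • ·) =ᵐ[μ] f) : ∃ b, f =ᵐ[μ] Function.const α b :=
  exists_eventuallyEq_const_of_forall_separating MeasurableSet fun U hU =>
    eventuallyConst_set.mp <| MeasureTheory.aeconst_of_forall_preimage_smul_ae_eq G
      (hf hU).nullMeasurableSet fun g => (h g).preimage U

/-- **Lemma 2 of the paper.** For a minimal action of a finitely generated group on a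
compact metric space, preserving an ergodic probability measure `μ`, any `L^∞` solution
`φ` of the cohomological equation `c(f,x) = φ(f•x) - φ(x)` (valid `μ`-a.e. for each `f`)
coincides `μ`-a.e. with a continuous function `φ̃` solving the equation everywhere. -/
theorem stmt4 {Γ X : Type*} [Group Γ] [Group.FG Γ] [MetricSpace X] [CompactSpace X]
    [MeasurableSpace X] [BorelSpace X]
    [MulAction Γ X] [ContinuousConstSMul Γ X]
    (hmin : ∀ x : X, Dense (MulAction.orbit Γ x))
    (c : Γ → X → ℝ) (hc : ∀ f : Γ, Continuous (c f))
    (hcoc : ∀ f g : Γ, ∀ x : X, c (f * g) x = c g x + c f (g • x))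
    (μ : Measure X) [IsProbabilityMeasure μ]
    (hinv : ∀ g : Γ, MeasurePreserving (fun x : X => g • x) μ μ)
    (herg : ∀ s : Set X, MeasurableSet s →
      (∀ g : Γ, (fun x : X => g • x) ⁻¹' s = s) → μ s = 0 ∨ μ s = 1)
    (φ : X → ℝ) (hφm : Measurable φ)
    (K : ℝ) (hK : ∀ᵐ x ∂μ, |φ x| ≤ K)
    (hrel : ∀ f : Γ, ∀ᵐ x ∂μ, c f x = φ (f • x) - φ x) :
    ∃ φt : X → ℝ, Continuous φt ∧ (∀ᵐ x ∂μ, φt x = φ x) ∧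
      ∀ f : Γ, ∀ x : X, c f x = φt (f • x) - φt x := by
  have := Group.FG.countable Γ
  have : MulAction.IsMinimal Γ X := ⟨hmin⟩
  have : SMulInvariantMeasure Γ X μ :=
    ⟨fun g _ hs => (hinv g).measure_preimage hs.nullMeasurableSet⟩
  have : ErgodicSMul Γ X μ := .of_forall_preimage_smul_eq herg
  set ν := μ.map fun x => (x, φ x)
  have : IsProbabilityMeasure ν :=
    Measure.isProbabilityMeasure_map (measurable_id.prodMk hφm).aemeasurable
  have hνinv : ∀ g, MapsTo (skewProduct c g) ν.support ν.support := fun g => by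
    have := Measure.mapsTo_support_map (μ := ν) (continuous_skewProduct (hc g))
      (measurable_skewProduct (hc g)).aemeasurable
    rwa [map_skewProduct_map_graph hφm (hc g) (hinv g) (hrel g)] at this
  obtain ⟨M, hMc, hM⟩ := exists_continuous_coboundary_of_mapsTo_skewProduct hcoc
    (isCompact_support_map_graph hφm hK)
    (Measure.nonempty_support (IsProbabilityMeasure.ne_zero ν)) hνinv
  obtain ⟨a, ha⟩ := ErgodicSMul.exists_ae_eq_const_of_ae_eq_comp_smul (G := Γ)
    (hφm.sub hMc.measurable) fun g => by
      filter_upwards [hrel g] with x hx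
      simp only [Function.comp_apply, Pi.sub_apply, hM g x] at hx ⊢
      linarith
  refine ⟨fun x => M x + a, hMc.add continuous_const, ?_, fun g x => by rw [hM]; ring⟩
  filter_upwards [ha] with x hx
  simp only [Pi.sub_apply, Function.const_apply] at hx
  linarith
end

section
/- Let f be a C² diffeomorphism of I = [a, b] with no fixed points in (a, b), such that fⁿ(x) → a as n → ∞ for every x ∈ [a, b). Fix c ∈ (a, b) (so the intervals fⁿ([f(c), c]), n ∈ ℤ, tile (a, b)), and let h : [f(c), c] → [f(c), c] be a homeomorphism fixing the endpoints that is bi-Lipschitz with constant M. Then the unique extension of h to [a, b] satisfying h ∘ f = f ∘ h, h(a)=a, h(b)=b is bi-Lipschitz with constant M·e^V, where V = ∫ₐᵇ |f''(s)/f'(s)| ds is the total variation of log f'. -/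
/-!
Every point of `(a, b)` lies in a tile `fⁿ [f c, c]` (`n ∈ ℤ`), and on such a tile `H` is
`fⁿ ∘ h ∘ f⁻ⁿ`. Since the intervals `fᵏ [p, q]` of a wandering interval `[p, q]` (`f q ≤ p`) do
not overlap, the chain rule bounds `log (fⁿ)' ξ - log (fⁿ)' η` for `ξ, η ∈ [p, q]` by the total
variation `V` of `log f'`. By the mean value theorem conjugating by `fⁿ` therefore costs at most a
factor `e^V` in the bi-Lipschitz constant, so `H` is `M e^V`-bi-Lipschitz on every tile. Being
monotone, it is so on every finite union of consecutive tiles, hence on `(a, b)`, and by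
continuity on `[a, b]`.
-/

open Set Filter Topology Function

def WithinFactor (K A B : ℝ) : Prop := K⁻¹ * B ≤ A ∧ A ≤ K * B

def IsBiLipschitzOn (K : ℝ) (H : ℝ → ℝ) (s : Set ℝ) : Prop :=
  ∀ x ∈ s, ∀ y ∈ s, WithinFactor K |H x - H y| |x - y|

namespace WithinFactor

variable {K M L A B A₁ A₂ B₁ B₂ d e : ℝ}

theorem add (h₁ : WithinFactor K A₁ B₁) (h₂ : WithinFactor K A₂ B₂) :
    WithinFactor K (A₁ + A₂) (B₁ + B₂) :=
  ⟨by linarith [h₁.1, h₂.1, mul_add K⁻¹ B₁ B₂], by linarith [h₁.2, h₂.2, mul_add K B₁ B₂]⟩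

theorem mul_mul (hM : 0 < M) (hB : 0 ≤ B) (hd : 0 < d) (he : 0 < e) (hde : d ≤ L * e)
    (hed : e ≤ L * d) (h : WithinFactor M A B) : WithinFactor (M * L) (d * A) (e * B) := by
  have hL : 0 < L := pos_of_mul_pos_left (hd.trans_le hde) he.le
  constructor
  · calc (M * L)⁻¹ * (e * B) ≤ (M * L)⁻¹ * (L * d * B) := by gcongr
      _ = d * (M⁻¹ * B) := by field_simp
      _ ≤ d * A := by gcongr; exact h.1
  · calc d * A ≤ d * (M * B) := by gcongr; exact h.2
      _ ≤ L * e * (M * B) := by gcongr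
      _ = M * L * (e * B) := by ring

theorem of_mul_mul (hM : 0 < M) (hB : 0 ≤ B) (hd : 0 < d) (he : 0 < e) (hde : d ≤ L * e)
    (hed : e ≤ L * d) (h : WithinFactor M (d * A) (e * B)) : WithinFactor (M * L) A B := by
  have hinv {x y : ℝ} (hx : 0 < x) (hy : 0 < y) (hxy : x ≤ L * y) : y⁻¹ ≤ L * x⁻¹ := by
    calc y⁻¹ = x * (x⁻¹ * y⁻¹) := by field_simp
      _ ≤ L * y * (x⁻¹ * y⁻¹) := by gcongr
      _ = L * x⁻¹ := by field_simp
  simpa [hd.ne', he.ne'] using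
    h.mul_mul hM (by positivity) (inv_pos.2 hd) (inv_pos.2 he) (hinv he hd hed) (hinv hd he hde)

end WithinFactor

namespace IsBiLipschitzOn

variable {K : ℝ} {H : ℝ → ℝ} {s t : Set ℝ}

theorem mono (h : IsBiLipschitzOn K H s) (hts : t ⊆ s) : IsBiLipschitzOn K H t :=
  fun x hx y hy => h x (hts hx) y (hts hy)

theorem Icc_self (K : ℝ) (H : ℝ → ℝ) (c : ℝ) : IsBiLipschitzOn K H (Icc c c) := by
  intro x hx y hy
  rw [Set.Icc_self, mem_singleton_iff] at hx hy
  simp [hx, hy, WithinFactor]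

theorem Icc_union {p q r : ℝ} (hH : MonotoneOn H (Icc p r)) (hpq : p ≤ q) (hqr : q ≤ r)
    (h₁ : IsBiLipschitzOn K H (Icc p q)) (h₂ : IsBiLipschitzOn K H (Icc q r)) :
    IsBiLipschitzOn K H (Icc p r) := by
  have split {u w v : ℝ} (huw : u ≤ w) (hwv : w ≤ v) : |u - v| = |u - w| + |w - v| := by
    rw [abs_of_nonpos, abs_of_nonpos, abs_of_nonpos] <;> linarith
  have hq : q ∈ Icc p r := ⟨hpq, hqr⟩
  have key : ∀ x ∈ Icc p r, ∀ y ∈ Icc p r, x ≤ y → WithinFactor K |H x - H y| |x - y| := by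
    intro x hx y hy hxy
    rcases le_total y q with hyq | hqy
    · exact h₁ x ⟨hx.1, hxy.trans hyq⟩ y ⟨hx.1.trans hxy, hyq⟩
    rcases le_total q x with hqx | hxq
    · exact h₂ x ⟨hqx, hxy.trans hy.2⟩ y ⟨hqy, hy.2⟩
    rw [split hxq hqy, split (hH hx hq hxq) (hH hq hy hqy)]
    exact (h₁ x ⟨hx.1, hxq⟩ q ⟨hpq, le_rfl⟩).add (h₂ q ⟨le_rfl, hqr⟩ y ⟨hqy, hy.2⟩)
  intro x hx y hy
  rcases le_total x y with hxy | hyx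
  · exact key x hx y hy hxy
  · rw [abs_sub_comm x, abs_sub_comm (H x)]
    exact key y hy x hx hyx

theorem closure (hH : ContinuousOn H (closure s)) (h : IsBiLipschitzOn K H s) :
    IsBiLipschitzOn K H (closure s) := by
  intro x hx y hy
  have hxy : (x, y) ∈ _root_.closure (s ×ˢ s) := by rw [closure_prod_eq]; exact ⟨hx, hy⟩
  have himage : ContinuousWithinAt (fun p : ℝ × ℝ => |H p.1 - H p.2|) (s ×ˢ s) (x, y) :=
    (((hH.comp continuousOn_fst fun _ hp => hp.1).sub
      (hH.comp continuousOn_snd fun _ hp => hp.2)).abs (x, y) (mk_mem_prod hx hy)).mono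
      (prod_mono subset_closure subset_closure)
  have hdist : Continuous fun p : ℝ × ℝ => |p.1 - p.2| := by fun_prop
  exact ⟨ContinuousWithinAt.closure_le hxy (hdist.const_mul _).continuousWithinAt himage
      fun p hp => (h _ hp.1 _ hp.2).1,
    ContinuousWithinAt.closure_le hxy himage (hdist.const_mul _).continuousWithinAt
      fun p hp => (h _ hp.1 _ hp.2).2⟩

theorem Ioo_of_tendsto {a b : ℝ} {lo hi : ℕ → ℝ} (hlo : Tendsto lo atTop (𝓝 a))
    (hhi : Tendsto hi atTop (𝓝 b)) (h : ∀ n, IsBiLipschitzOn K H (Icc (lo n) (hi n))) :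
    IsBiLipschitzOn K H (Ioo a b) := by
  intro x hx y hy
  obtain ⟨n, hxl, hyl, hxh, hyh⟩ := ((hlo.eventually_lt_const hx.1).and
    ((hlo.eventually_lt_const hy.1).and ((hhi.eventually_const_lt hx.2).and
      (hhi.eventually_const_lt hy.2)))).exists
  exact h n x ⟨hxl.le, hxh.le⟩ y ⟨hyl.le, hyh.le⟩

theorem Icc_of_tiles {a b : ℝ} {lo hi : ℕ → ℝ} (hab : a < b) (hHc : ContinuousOn H (Icc a b))
    (hHm : MonotoneOn H (Icc a b)) (h0 : lo 0 = hi 0) (hlo_succ : ∀ n, lo (n + 1) ≤ lo n)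
    (hhi_succ : ∀ n, hi n ≤ hi (n + 1)) (hlo_ge : ∀ n, a ≤ lo n) (hhi_le : ∀ n, hi n ≤ b)
    (hlo : Tendsto lo atTop (𝓝 a)) (hhi : Tendsto hi atTop (𝓝 b))
    (hlo_tile : ∀ n, IsBiLipschitzOn K H (Icc (lo (n + 1)) (lo n)))
    (hhi_tile : ∀ n, IsBiLipschitzOn K H (Icc (hi n) (hi (n + 1)))) :
    IsBiLipschitzOn K H (Icc a b) := by
  have hsub (m n : ℕ) : Icc (lo m) (hi n) ⊆ Icc a b := Icc_subset_Icc (hlo_ge m) (hhi_le n)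
  have hcore (n : ℕ) : lo n ≤ hi n ∧ IsBiLipschitzOn K H (Icc (lo n) (hi n)) := by
    induction n with
    | zero => exact ⟨h0.le, h0 ▸ Icc_self K H _⟩
    | succ n ih =>
      have hlow := (hlo_tile n).Icc_union (hHm.mono (hsub _ _)) (hlo_succ n) ih.1 ih.2
      exact ⟨(hlo_succ n).trans (ih.1.trans (hhi_succ n)),
        hlow.Icc_union (hHm.mono (hsub _ _)) ((hlo_succ n).trans ih.1) (hhi_succ n) (hhi_tile n)⟩
  rw [← closure_Ioo hab.ne] at hHc ⊢
  exact (Ioo_of_tendsto hlo hhi fun n => (hcore n).2).closure hHc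

end IsBiLipschitzOn

theorem MonotoneOn.iterate {α : Type*} [Preorder α] {g : α → α} {s : Set α}
    (hmaps : MapsTo g s s) (hg : MonotoneOn g s) (n : ℕ) : MonotoneOn g^[n] s := by
  induction n with
  | zero => exact monotoneOn_id
  | succ n ih => rw [iterate_succ]; exact ih.comp hg hmaps

section Orbits

variable {α : Type*} {f H : α → α} {s : Set α}

theorem Set.MapsTo.iterate_comm (hf : MapsTo f s s) (hH : ∀ z ∈ s, H (f z) = f (H z)) (n : ℕ) :
    ∀ z ∈ s, H (f^[n] z) = f^[n] (H z) := by
  induction n with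
  | zero => exact fun _ _ => rfl
  | succ n ih =>
    intro z hz
    rw [iterate_succ_apply, iterate_succ_apply, ih _ (hf hz), hH z hz]

theorem Set.SurjOn.exists_backward_orbit (hf : SurjOn f s s) {c : α} (hc : c ∈ s) :
    ∃ u : ℕ → α, u 0 = c ∧ ∀ n, u n ∈ s ∧ f (u (n + 1)) = u n := by
  have : Nonempty α := ⟨c⟩
  have hmem (n : ℕ) : (invFunOn f s)^[n] c ∈ s := hf.mapsTo_invFunOn.iterate n hc
  refine ⟨fun n => (invFunOn f s)^[n] c, rfl, fun n => ⟨hmem n, ?_⟩⟩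
  simp only [iterate_succ_apply']
  exact hf.rightInvOn_invFunOn (hmem n)

variable {u : ℕ → α}

theorem iterate_apply_backward_orbit (hfu : ∀ n, f (u (n + 1)) = u n) (n : ℕ) :
    f^[n] (u n) = u 0 := by
  induction n with
  | zero => rfl
  | succ n ih => rw [iterate_succ_apply, hfu, ih]

theorem apply_backward_orbit_eq_self (hf : InjOn f s) (hH : MapsTo H s s)
    (hcomm : ∀ z ∈ s, H (f z) = f (H z)) (hu : ∀ n, u n ∈ s) (hfu : ∀ n, f (u (n + 1)) = u n)
    (h0 : H (u 0) = u 0) (n : ℕ) : H (u n) = u n := by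
  induction n with
  | zero => exact h0
  | succ n ih => exact hf (hH (hu _)) (hu _) (by rw [← hcomm _ (hu _), hfu, ih])

end Orbits

section Convergence

variable {f : ℝ → ℝ} {a b : ℝ}

theorem tendsto_iterate_of_lt (hf : Continuous f) (hmaps : MapsTo f (Ioo a b) (Ioo a b))
    (hlt : ∀ x ∈ Ioo a b, f x < x) {x : ℝ} (hx : x ∈ Ioo a b) :
    Tendsto (fun n => f^[n] x) atTop (𝓝 a) := by
  have hmem (n : ℕ) := hmaps.iterate n hx
  have hanti : Antitone fun n => f^[n] x := antitone_nat_of_succ_le fun n => by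
    rw [iterate_succ_apply']; exact (hlt _ (hmem n)).le
  have hbdd : BddBelow (range fun n => f^[n] x) := ⟨a, forall_mem_range.2 fun n => (hmem n).1.le⟩
  have htend := tendsto_atTop_ciInf hanti hbdd
  have hfix := isFixedPt_of_tendsto_iterate htend hf.continuousAt
  have hLb : ⨅ n, f^[n] x < b := (ciInf_le hbdd 0).trans_lt hx.2
  rcases (le_ciInf fun n => (hmem n).1.le : a ≤ ⨅ n, f^[n] x).eq_or_lt with h | h
  · rwa [← h] at htend
  · exact absurd hfix (hlt _ ⟨h, hLb⟩).ne

theorem tendsto_of_backward_orbit (hf : Continuous f) (hlt : ∀ x ∈ Ioo a b, f x < x)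
    {u : ℕ → ℝ} (hu : ∀ n, u n ∈ Ioo a b) (hfu : ∀ n, f (u (n + 1)) = u n) :
    Tendsto u atTop (𝓝 b) := by
  have hmono : Monotone u := monotone_nat_of_le_succ fun n => (hfu n ▸ hlt _ (hu (n + 1))).le
  have hbdd : BddAbove (range u) := ⟨b, forall_mem_range.2 fun n => (hu n).2.le⟩
  have htend := tendsto_atTop_ciSup hmono hbdd
  have hfix : f (⨆ n, u n) = ⨆ n, u n := tendsto_nhds_unique
    ((hf.tendsto _).comp (htend.comp (tendsto_add_atTop_nat 1))) (by simpa only [comp_def, hfu])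
  have haL : a < ⨆ n, u n := (hu 0).1.trans_le (le_ciSup hbdd 0)
  rcases (ciSup_le fun n => (hu n).2.le : ⨆ n, u n ≤ b).eq_or_lt with h | h
  · rwa [h] at htend
  · exact absurd hfix (hlt _ ⟨haL, h⟩).ne

end Convergence

theorem surjOn_Ioo_of_surjOn_Icc {f : ℝ → ℝ} {a b : ℝ} (hf : SurjOn f (Icc a b) (Icc a b))
    (hfa : f a = a) (hfb : f b = b) : SurjOn f (Ioo a b) (Ioo a b) := by
  intro y hy
  obtain ⟨x, hx, rfl⟩ := hf (Ioo_subset_Icc_self hy)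
  refine ⟨x, ⟨hx.1.lt_of_ne ?_, hx.2.lt_of_ne ?_⟩, rfl⟩
  · rintro rfl; exact hy.1.ne' hfa
  · rintro rfl; exact hy.2.ne hfb

section Distortion

variable {f : ℝ → ℝ} {a b p q : ℝ}

theorem hasDerivAt_iterate (hf : Differentiable ℝ f) (n : ℕ) (x : ℝ) :
    HasDerivAt f^[n] (∏ k ∈ Finset.range n, deriv f (f^[k] x)) x := by
  induction n with
  | zero => simpa using hasDerivAt_id x
  | succ n ih =>
    rw [iterate_succ', Finset.prod_range_succ, mul_comm]
    exact (hf _).hasDerivAt.comp x ih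

theorem deriv_iterate (hf : Differentiable ℝ f) (n : ℕ) (x : ℝ) :
    deriv f^[n] x = ∏ k ∈ Finset.range n, deriv f (f^[k] x) :=
  (hasDerivAt_iterate hf n x).deriv

theorem sum_sub_iterate_le_of_wandering {ℓ G : ℝ → ℝ} {ξ η : ℝ}
    (hmaps : MapsTo f (Icc a b) (Icc a b)) (hmono : MonotoneOn f (Icc a b))
    (hG : ∀ u ∈ Icc a b, ∀ v ∈ Icc a b, u ≤ v → |ℓ v - ℓ u| ≤ G v - G u)
    (hap : a ≤ p) (hqb : q ≤ b) (hfq : f q ≤ p) (hξ : ξ ∈ Icc p q) (hη : η ∈ Icc p q) (n : ℕ) :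
    ∑ k ∈ Finset.range n, (ℓ (f^[k] ξ) - ℓ (f^[k] η)) ≤ G b - G a := by
  have hpq : Icc p q ⊆ Icc a b := Icc_subset_Icc hap hqb
  have hp : p ∈ Icc a b := hpq ⟨le_rfl, hξ.1.trans hξ.2⟩
  have hq : q ∈ Icc a b := hpq ⟨hξ.1.trans hξ.2, le_rfl⟩
  have hGm : MonotoneOn G (Icc a b) := fun u hu v hv huv =>
    sub_nonneg.1 ((abs_nonneg _).trans (hG u hu v hv huv))
  have osc : ∀ u ∈ Icc a b, ∀ v ∈ Icc a b, ∀ x ∈ Icc u v, ∀ y ∈ Icc u v,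
      ℓ x - ℓ y ≤ G v - G u := by
    intro u hu v hv x hx y hy
    have huv : Icc u v ⊆ Icc a b := Icc_subset_Icc hu.1 hv.2
    rcases le_total y x with hyx | hxy
    · linarith [le_abs_self (ℓ x - ℓ y), hG y (huv hy) x (huv hx) hyx,
        hGm (huv hx) hv hx.2, hGm hu (huv hy) hy.1]
    · linarith [neg_abs_le (ℓ y - ℓ x), hG x (huv hx) y (huv hy) hxy,
        hGm (huv hy) hv hy.2, hGm hu (huv hx) hx.1]
  -- `f^[k] '' Icc p q ⊆ Icc (f^[k+1] q) (f^[k] q)`, and these intervals telescope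
  have term (k : ℕ) : ℓ (f^[k] ξ) - ℓ (f^[k] η) ≤ G (f^[k] q) - G (f^[k + 1] q) := by
    have hk := hmono.iterate hmaps k
    have hfk : f^[k + 1] q ≤ f^[k] p := by
      rw [iterate_succ_apply]; exact hk (hmaps hq) hp hfq
    have hpqk := (hk.mono hpq).mapsTo_Icc
    linarith [osc _ (hmaps.iterate k hp) _ (hmaps.iterate k hq) _ (hpqk hξ) _ (hpqk hη),
      hGm (hmaps.iterate (k + 1) hq) (hmaps.iterate k hp) hfk]
  have hnq := hmaps.iterate n hq
  calc ∑ k ∈ Finset.range n, (ℓ (f^[k] ξ) - ℓ (f^[k] η))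
      ≤ ∑ k ∈ Finset.range n, (G (f^[k] q) - G (f^[k + 1] q)) := Finset.sum_le_sum fun k _ => term k
    _ = G q - G (f^[n] q) := Finset.sum_range_sub' _ n
    _ ≤ G b - G a := by
      linarith [hGm hq (right_mem_Icc.2 (hq.1.trans hq.2)) hq.2,
        hGm (left_mem_Icc.2 (hq.1.trans hq.2)) hnq hnq.1]

theorem continuousOn_deriv_deriv_div {s : Set ℝ} (hf : ContDiff ℝ 2 f)
    (hf' : ∀ x ∈ s, 0 < deriv f x) : ContinuousOn (fun x => deriv (deriv f) x / deriv f x) s :=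
  ((contDiff_succ_iff_deriv (n := 1).mp hf).2.2.continuous_deriv le_rfl).continuousOn.div
    (hf.continuous_deriv one_le_two).continuousOn fun x hx => (hf' x hx).ne'

theorem abs_log_deriv_sub_le_integral (hf : ContDiff ℝ 2 f)
    (hf' : ∀ x ∈ Icc a b, 0 < deriv f x) {u v : ℝ} (hu : u ∈ Icc a b) (hv : v ∈ Icc a b)
    (huv : u ≤ v) :
    |Real.log (deriv f v) - Real.log (deriv f u)| ≤
      ∫ s in u..v, |deriv (deriv f) s / deriv f s| := by
  have h1 : ContDiff ℝ 1 (deriv f) := (contDiff_succ_iff_deriv (n := 1).mp hf).2.2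
  have hsub := uIcc_subset_Icc hu hv
  have hint : IntervalIntegrable (fun s => deriv (deriv f) s / deriv f s) MeasureTheory.volume u v :=
    ((continuousOn_deriv_deriv_div hf hf').mono hsub).intervalIntegrable
  rw [← intervalIntegral.integral_eq_sub_of_hasDerivAt
    (fun x hx => (h1.differentiable one_ne_zero x).hasDerivAt.log (hf' x (hsub hx)).ne') hint]
  exact intervalIntegral.abs_integral_le_integral_abs huv

def BoundedDistortionOn (L : ℝ) (φ : ℝ → ℝ) (s : Set ℝ) : Prop :=
  (∀ ξ ∈ s, 0 < deriv φ ξ) ∧ ∀ ξ ∈ s, ∀ η ∈ s, deriv φ ξ ≤ L * deriv φ η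

theorem boundedDistortionOn_iterate (hf : ContDiff ℝ 2 f) (hf' : ∀ x ∈ Icc a b, 0 < deriv f x)
    (hmaps : MapsTo f (Icc a b) (Icc a b)) (hmono : MonotoneOn f (Icc a b))
    (hap : a ≤ p) (hqb : q ≤ b) (hfq : f q ≤ p) (n : ℕ) :
    BoundedDistortionOn (Real.exp (∫ s in a..b, |deriv (deriv f) s / deriv f s|)) f^[n]
      (Icc p q) := by
  have hdiff := hf.differentiable two_ne_zero
  have hpq := Icc_subset_Icc hap hqb
  have hpos {x : ℝ} (hx : x ∈ Icc p q) : 0 < ∏ k ∈ Finset.range n, deriv f (f^[k] x) :=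
    Finset.prod_pos fun k _ => hf' _ (hmaps.iterate k (hpq hx))
  refine ⟨fun ξ hξ => deriv_iterate hdiff n ξ ▸ hpos hξ, fun ξ hξ η hη => ?_⟩
  set G := fun x => ∫ s in a..x, |deriv (deriv f) s / deriv f s|
  have hint {u : ℝ} (hu : u ∈ Icc a b) :
      IntervalIntegrable (fun s => |deriv (deriv f) s / deriv f s|) MeasureTheory.volume a u :=
    ((continuousOn_deriv_deriv_div hf hf').abs.mono
      (uIcc_subset_Icc (left_mem_Icc.2 (hu.1.trans hu.2)) hu)).intervalIntegrable
  have hG : ∀ u ∈ Icc a b, ∀ v ∈ Icc a b, u ≤ v →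
      |Real.log (deriv f v) - Real.log (deriv f u)| ≤ G v - G u := fun u hu v hv huv =>
    (intervalIntegral.integral_interval_sub_left (hint hv) (hint hu)).symm ▸
      abs_log_deriv_sub_le_integral hf hf' hu hv huv
  have hsum := sum_sub_iterate_le_of_wandering hmaps hmono hG hap hqb hfq hξ hη n
  rw [Finset.sum_sub_distrib, ← Real.log_prod fun k _ => (hf' _ (hmaps.iterate k (hpq hξ))).ne',
    ← Real.log_prod fun k _ => (hf' _ (hmaps.iterate k (hpq hη))).ne'] at hsum
  have hGa : G a = 0 := intervalIntegral.integral_same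
  rw [deriv_iterate hdiff, deriv_iterate hdiff, ← Real.exp_log (hpos hξ), ← Real.exp_log (hpos hη),
    ← Real.exp_add, Real.exp_le_exp]
  linarith

end Distortion

section Transfer

variable {φ H : ℝ → ℝ} {L M p q : ℝ}

theorem exists_sub_eq_deriv_mul (hφ : Differentiable ℝ φ) (u v : ℝ) :
    ∃ ξ ∈ uIcc u v, φ u - φ v = deriv φ ξ * (u - v) := by
  wlog huv : u < v generalizing u v
  · rcases (not_lt.1 huv).eq_or_lt with hvu | hvu
    · exact ⟨v, right_mem_uIcc, by rw [hvu]; ring⟩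
    · obtain ⟨ξ, hξ, h⟩ := this v u hvu
      exact ⟨ξ, uIcc_comm u v ▸ hξ, by linear_combination -h⟩
  obtain ⟨ξ, hξ, h⟩ := exists_deriv_eq_slope φ huv hφ.continuous.continuousOn
    fun x _ => (hφ x).differentiableWithinAt
  refine ⟨ξ, Icc_subset_uIcc (Ioo_subset_Icc_self hξ), ?_⟩
  rw [h]
  field_simp [(sub_pos.2 huv).ne']
  ring

theorem exists_abs_sub_eq_deriv_mul_abs (hφ : Differentiable ℝ φ)
    (hpos : ∀ ξ ∈ Icc p q, 0 < deriv φ ξ) {u v : ℝ} (hu : u ∈ Icc p q) (hv : v ∈ Icc p q) :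
    ∃ ξ ∈ Icc p q, |φ u - φ v| = deriv φ ξ * |u - v| := by
  obtain ⟨ξ, hξ, h⟩ := exists_sub_eq_deriv_mul hφ u v
  have hξ' := uIcc_subset_Icc hu hv hξ
  exact ⟨ξ, hξ', by rw [h, abs_mul, abs_of_pos (hpos ξ hξ')]⟩

variable {u v u' v' : ℝ}

theorem WithinFactor.map_of_boundedDistortionOn (hφ : Differentiable ℝ φ)
    (hd : BoundedDistortionOn L φ (Icc p q)) (hM : 0 < M) (hu : u ∈ Icc p q) (hv : v ∈ Icc p q)
    (hu' : u' ∈ Icc p q) (hv' : v' ∈ Icc p q) (h : WithinFactor M |u' - v'| |u - v|) :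
    WithinFactor (M * L) |φ u' - φ v'| |φ u - φ v| := by
  obtain ⟨ξ, hξ, hξe⟩ := exists_abs_sub_eq_deriv_mul_abs hφ hd.1 hu' hv'
  obtain ⟨η, hη, hηe⟩ := exists_abs_sub_eq_deriv_mul_abs hφ hd.1 hu hv
  rw [hξe, hηe]
  exact h.mul_mul hM (abs_nonneg _) (hd.1 ξ hξ) (hd.1 η hη) (hd.2 ξ hξ η hη) (hd.2 η hη ξ hξ)

theorem WithinFactor.of_map_of_boundedDistortionOn (hφ : Differentiable ℝ φ)
    (hd : BoundedDistortionOn L φ (Icc p q)) (hM : 0 < M) (hu : u ∈ Icc p q) (hv : v ∈ Icc p q)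
    (hu' : u' ∈ Icc p q) (hv' : v' ∈ Icc p q) (h : WithinFactor M |φ u' - φ v'| |φ u - φ v|) :
    WithinFactor (M * L) |u' - v'| |u - v| := by
  obtain ⟨ξ, hξ, hξe⟩ := exists_abs_sub_eq_deriv_mul_abs hφ hd.1 hu' hv'
  obtain ⟨η, hη, hηe⟩ := exists_abs_sub_eq_deriv_mul_abs hφ hd.1 hu hv
  rw [hξe, hηe] at h
  exact h.of_mul_mul hM (abs_nonneg _) (hd.1 ξ hξ) (hd.1 η hη) (hd.2 ξ hξ η hη) (hd.2 η hη ξ hξ)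

theorem IsBiLipschitzOn.Icc_map (hφ : Differentiable ℝ φ) (hd : BoundedDistortionOn L φ (Icc p q))
    (hM : 0 < M) (hpq : p ≤ q) (hH : MapsTo H (Icc p q) (Icc p q))
    (hconj : ∀ z ∈ Icc p q, H (φ z) = φ (H z)) (h : IsBiLipschitzOn M H (Icc p q)) :
    IsBiLipschitzOn (M * L) H (Icc (φ p) (φ q)) := by
  refine IsBiLipschitzOn.mono ?_ (intermediate_value_Icc hpq hφ.continuous.continuousOn)
  rintro _ ⟨x, hx, rfl⟩ _ ⟨y, hy, rfl⟩
  rw [hconj x hx, hconj y hy]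
  exact (h x hx y hy).map_of_boundedDistortionOn hφ hd hM hx hy (hH hx) (hH hy)

theorem IsBiLipschitzOn.of_Icc_map (hφ : Differentiable ℝ φ)
    (hd : BoundedDistortionOn L φ (Icc p q)) (hM : 0 < M) (hH : MapsTo H (Icc p q) (Icc p q))
    (hconj : ∀ z ∈ Icc p q, H (φ z) = φ (H z)) (h : IsBiLipschitzOn M H (Icc (φ p) (φ q))) :
    IsBiLipschitzOn (M * L) H (Icc p q) := by
  have hmaps : MapsTo φ (Icc p q) (Icc (φ p) (φ q)) :=
    (strictMonoOn_of_deriv_pos (convex_Icc p q) hφ.continuous.continuousOn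
      fun x hx => hd.1 x (interior_subset hx)).monotoneOn.mapsTo_Icc
  intro x hx y hy
  have hxy := h _ (hmaps hx) _ (hmaps hy)
  rw [hconj x hx, hconj y hy] at hxy
  exact hxy.of_map_of_boundedDistortionOn hφ hd hM hx hy (hH hx) (hH hy)

end Transfer

section Tiles

variable {f H : ℝ → ℝ} {a b p q M : ℝ}

theorem IsBiLipschitzOn.Icc_iterate (hf : ContDiff ℝ 2 f) (hf' : ∀ x ∈ Icc a b, 0 < deriv f x)
    (hmaps : MapsTo f (Icc a b) (Icc a b)) (hmono : MonotoneOn f (Icc a b))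
    (hHm : MonotoneOn H (Icc a b)) (hcomm : ∀ z ∈ Icc a b, H (f z) = f (H z)) (hM : 0 < M)
    (hap : a ≤ p) (hqb : q ≤ b) (hpq : p ≤ q) (hfq : f q ≤ p) (hHp : H p = p) (hHq : H q = q)
    (n : ℕ) (h : IsBiLipschitzOn M H (Icc p q)) :
    IsBiLipschitzOn (M * Real.exp (∫ s in a..b, |deriv (deriv f) s / deriv f s|)) H
      (Icc (f^[n] p) (f^[n] q)) :=
  h.Icc_map ((hf.differentiable two_ne_zero).iterate n)
    (boundedDistortionOn_iterate hf hf' hmaps hmono hap hqb hfq n) hM hpq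
    (by simpa only [hHp, hHq] using (hHm.mono (Icc_subset_Icc hap hqb)).mapsTo_Icc)
    fun z hz => hmaps.iterate_comm hcomm n z (Icc_subset_Icc hap hqb hz)

theorem IsBiLipschitzOn.of_Icc_iterate (hf : ContDiff ℝ 2 f)
    (hf' : ∀ x ∈ Icc a b, 0 < deriv f x)
    (hmaps : MapsTo f (Icc a b) (Icc a b)) (hmono : MonotoneOn f (Icc a b))
    (hHm : MonotoneOn H (Icc a b)) (hcomm : ∀ z ∈ Icc a b, H (f z) = f (H z)) (hM : 0 < M)
    (hap : a ≤ p) (hqb : q ≤ b) (hfq : f q ≤ p) (hHp : H p = p) (hHq : H q = q)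
    (n : ℕ) (h : IsBiLipschitzOn M H (Icc (f^[n] p) (f^[n] q))) :
    IsBiLipschitzOn (M * Real.exp (∫ s in a..b, |deriv (deriv f) s / deriv f s|)) H (Icc p q) :=
  h.of_Icc_map (φ := f^[n]) ((hf.differentiable two_ne_zero).iterate n)
    (boundedDistortionOn_iterate hf hf' hmaps hmono hap hqb hfq n) hM
    (by simpa only [hHp, hHq] using (hHm.mono (Icc_subset_Icc hap hqb)).mapsTo_Icc)
    fun z hz => hmaps.iterate_comm hcomm n z (Icc_subset_Icc hap hqb hz)

end Tiles

theorem stmt9_general (a b c : ℝ) (hab : a < b) (hc : c ∈ Set.Ioo a b)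
    (f : ℝ → ℝ) (hf : ContDiff ℝ 2 f)
    (hfa : f a = a) (hfb : f b = b)
    (hf_mono : StrictMonoOn f (Set.Icc a b))
    (hf_surj : f '' Set.Icc a b = Set.Icc a b)
    (hf' : ∀ x ∈ Set.Icc a b, 0 < deriv f x)
    (hcontract : ∀ x ∈ Set.Ioo a b, f x < x)
    (M : ℝ) (hM : 1 ≤ M)
    (h : ℝ → ℝ)
    (hh_end : h (f c) = f c ∧ h c = c)
    (hh_bilip : ∀ x ∈ Set.Icc (f c) c, ∀ y ∈ Set.Icc (f c) c,
      M⁻¹ * |x - y| ≤ |h x - h y| ∧ |h x - h y| ≤ M * |x - y|)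
    (H : ℝ → ℝ)
    (hH_cont : ContinuousOn H (Set.Icc a b))
    (hH_mono : StrictMonoOn H (Set.Icc a b))
    (hH_agree : ∀ x ∈ Set.Icc (f c) c, H x = h x)
    (hH_comm : ∀ x ∈ Set.Icc a b, H (f x) = f (H x))
    (hHa : H a = a) (hHb : H b = b)
    (V : ℝ) (hV : V = ∫ s in a..b, |deriv (deriv f) s / deriv f s|) :
    ∀ x ∈ Set.Icc a b, ∀ y ∈ Set.Icc a b,
      (M * Real.exp V)⁻¹ * |x - y| ≤ |H x - H y| ∧
        |H x - H y| ≤ M * Real.exp V * |x - y| := by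
  have hM0 : 0 < M := one_pos.trans_le hM
  have hmaps : MapsTo f (Icc a b) (Icc a b) := fun x hx => hf_surj.le (mem_image_of_mem f hx)
  have hmono := hf_mono.monotoneOn
  have hHm := hH_mono.monotoneOn
  have hfIoo : MapsTo f (Ioo a b) (Ioo a b) := fun x hx =>
    ⟨hfa ▸ hf_mono (left_mem_Icc.2 hab.le) (Ioo_subset_Icc_self hx) hx.1, (hcontract x hx).trans hx.2⟩
  have hlo (n : ℕ) := Ioo_subset_Icc_self (hfIoo.iterate n hc)
  obtain ⟨u, hu0, hu⟩ := (surjOn_Ioo_of_surjOn_Icc hf_surj.ge hfa hfb).exists_backward_orbit hc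
  have horbit := iterate_apply_backward_orbit fun n => (hu n).2
  have hHc : H c = c := (hH_agree c ⟨(hcontract c hc).le, le_rfl⟩).trans hh_end.2
  have hHu := apply_backward_orbit_eq_self hf_mono.injOn
    (by simpa only [hHa, hHb] using hHm.mapsTo_Icc) hH_comm (fun n => Ioo_subset_Icc_self (hu n).1)
    (fun n => (hu n).2) (hu0 ▸ hHc)
  have hh : IsBiLipschitzOn M H (Icc (f c) c) := fun x hx y hy => by
    rw [hH_agree x hx, hH_agree y hy]; exact hh_bilip x hx y hy
  have hlow (n : ℕ) : IsBiLipschitzOn (M * Real.exp V) H (Icc (f^[n + 1] c) (f^[n] c)) := by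
    rw [iterate_succ_apply, hV]
    exact hh.Icc_iterate hf hf' hmaps hmono hHm hH_comm hM0 (hlo 1).1 (hlo 0).2
      (hcontract c hc).le le_rfl ((hH_comm c (hlo 0)).trans (congrArg f hHc)) hHc n
  have hup (n : ℕ) : IsBiLipschitzOn (M * Real.exp V) H (Icc (u n) (u (n + 1))) := by
    have htile : Icc (f^[n + 1] (u n)) (f^[n + 1] (u (n + 1))) = Icc (f c) c := by
      rw [horbit (n + 1), iterate_succ_apply', horbit n, hu0]
    rw [hV]
    exact IsBiLipschitzOn.of_Icc_iterate hf hf' hmaps hmono hHm hH_comm hM0 (hu n).1.1.le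
      (hu (n + 1)).1.2.le (hu n).2.le (hHu n) (hHu (n + 1)) (n + 1) (htile ▸ hh)
  exact IsBiLipschitzOn.Icc_of_tiles hab hH_cont hHm hu0.symm
    (fun n => (iterate_succ_apply' f n c).symm ▸ (hcontract _ (hfIoo.iterate n hc)).le)
    (fun n => ((hu n).2 ▸ hcontract _ (hu (n + 1)).1).le) (fun n => (hlo n).1)
    (fun n => (hu n).1.2.le) (tendsto_iterate_of_lt hf.continuous hfIoo hcontract hc)
    (tendsto_of_backward_orbit hf.continuous hcontract (fun n => (hu n).1) fun n => (hu n).2)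
    hlow hup

/-- Let `f` be a `C²` diffeomorphism of `[a,b]` with no interior fixed points (so
`fⁿ(x) → a` for `x < b`), let `c ∈ (a,b)`, and let `h` be a self-homeomorphism of the
fundamental domain `[f c, c]` fixing its endpoints and bi-Lipschitz with constant `M`.
Then the (unique) extension `H` of `h` to `[a,b]` commuting with `f` and fixing `a, b`
is bi-Lipschitz with constant `M·e^V`, where `V = ∫ₐᵇ |f''/f'|` is the total variation
of `log f'`. -/
theorem stmt9 (a b c : ℝ) (hab : a < b) (hc : c ∈ Set.Ioo a b)
    (f : ℝ → ℝ) (hf : ContDiff ℝ 2 f)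
    (hfa : f a = a) (hfb : f b = b)
    (hf_mono : StrictMonoOn f (Set.Icc a b))
    (hf_surj : f '' Set.Icc a b = Set.Icc a b)
    (hf' : ∀ x ∈ Set.Icc a b, 0 < deriv f x)
    (hcontract : ∀ x ∈ Set.Ioo a b, f x < x)
    (M : ℝ) (hM : 1 ≤ M)
    (h : ℝ → ℝ)
    (hh_cont : ContinuousOn h (Set.Icc (f c) c))
    (hh_mono : StrictMonoOn h (Set.Icc (f c) c))
    (hh_end : h (f c) = f c ∧ h c = c)
    (hh_surj : h '' Set.Icc (f c) c = Set.Icc (f c) c)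
    (hh_bilip : ∀ x ∈ Set.Icc (f c) c, ∀ y ∈ Set.Icc (f c) c,
      M⁻¹ * |x - y| ≤ |h x - h y| ∧ |h x - h y| ≤ M * |x - y|)
    (H : ℝ → ℝ)
    (hH_cont : ContinuousOn H (Set.Icc a b))
    (hH_mono : StrictMonoOn H (Set.Icc a b))
    (hH_agree : ∀ x ∈ Set.Icc (f c) c, H x = h x)
    (hH_comm : ∀ x ∈ Set.Icc a b, H (f x) = f (H x))
    (hHa : H a = a) (hHb : H b = b)
    (V : ℝ) (hV : V = ∫ s in a..b, |deriv (deriv f) s / deriv f s|) :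
    ∀ x ∈ Set.Icc a b, ∀ y ∈ Set.Icc a b,
      (M * Real.exp V)⁻¹ * |x - y| ≤ |H x - H y| ∧
        |H x - H y| ≤ M * Real.exp V * |x - y| :=
  stmt9_general a b c hab hc f hf hfa hfb hf_mono hf_surj hf' hcontract M hM h hh_end hh_bilip H
    hH_cont hH_mono hH_agree hH_comm hHa hHb V hV
end

section
/- With ℓ_{2n} = ℓ_{2n+1}, ℓ_n/ℓ_{n+1} → 1 as n → ∞, ℓ̄_{2n} = 4ℓ_{2n}/3, ℓ̄_{2n+1} = 2ℓ_{2n+1}/3, for any fixed integer N the sequence ℓ̄_{n+N}/ℓ_n does not converge as n → ∞: along even n shifted by even N it tends to 4/3 and along odd n it tends to 2/3 (and vice versa for odd N). Consequently, if φ is a C¹ diffeomorphism of [0,1] mapping I_n onto Ī_{n+N} for all n, with both families of intervals accumulating only at 1, a contradiction arises, so no such C¹ diffeomorphism exists. -/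
/-!
Since `ℓ n / ℓ (n + 1) → 1`, also `ℓ (n + N) / ℓ n → 1` for every fixed shift `N`; hence
`lb (n + N) / ℓ n` tends to `4/3` along one parity class of `n + N` and to `2/3` along the
other, so it has no limit. On the other hand, a monotone `φ` mapping `I_n = [S n, S (n + 1)]`
onto `Ī_{n+N}` sends endpoints to endpoints, so by the mean value theorem
`lb (n + N) / ℓ n = φ' ξ_n` for some `ξ_n ∈ I_n`. As `I_n` shrinks to `1` and `φ'` is
continuous, these ratios would converge to `φ' 1`.
-/

open Filter Set Topology

section PartialSums

variable {α : Type*} [AddCommMonoid α] [TopologicalSpace α] {f s : ℤ → α}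

theorem hasSum_indicator_Iio_of_hasSum_subtype
    (hs : ∀ n, HasSum (fun i : {i : ℤ // i < n} => f i) (s n)) (n : ℤ) :
    HasSum ((Iio n).indicator f) (s n) :=
  hasSum_subtype_iff_indicator.1 (hs n)

theorem partialSums_Iio_add_one [ContinuousAdd α] [T2Space α]
    (hs : ∀ n, HasSum (fun i : {i : ℤ // i < n} => f i) (s n)) (n : ℤ) :
    s (n + 1) = s n + f n := by
  have h := hasSum_indicator_Iio_of_hasSum_subtype hs (n + 1)
  rw [← Order.succ_eq_add_one, Order.Iio_succ_eq_insert, insert_eq, union_comm,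
    indicator_union_of_disjoint (by simp)] at h
  exact h.unique ((hasSum_indicator_Iio_of_hasSum_subtype hs n).add
    (hasSum_subtype_iff_indicator.1 (hasSum_singleton n f)))

end PartialSums

section NonnegPartialSums

variable {f s : ℤ → ℝ} {T : ℝ} (hf : ∀ i, 0 ≤ f i)
  (hs : ∀ n, HasSum (fun i : {i : ℤ // i < n} => f i) (s n))
include hf hs

theorem partialSums_Iio_le (hT : HasSum f T) (n : ℤ) : s n ≤ T :=
  hasSum_le (indicator_le_self' fun i _ => hf i) (hasSum_indicator_Iio_of_hasSum_subtype hs n) hT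

theorem sum_le_partialSums_Iio (F : Finset ℤ) {n : ℤ} (hF : ∀ i ∈ F, i < n) :
    ∑ i ∈ F, f i ≤ s n := by
  have h := sum_le_hasSum F (fun i _ => indicator_nonneg (fun i _ => hf i) i)
    (hasSum_indicator_Iio_of_hasSum_subtype hs n)
  rwa [Finset.sum_congr rfl fun i hi => indicator_of_mem (mem_Iio.2 (hF i hi)) f] at h

theorem tendsto_partialSums_Iio (hT : HasSum f T) : Tendsto s atTop (𝓝 T) := by
  refine tendsto_atTop_isLUB (monotone_int_of_le_succ fun n => ?_) ⟨?_, fun u hu => ?_⟩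
  · rw [partialSums_Iio_add_one hs]
    exact le_add_of_nonneg_right (hf n)
  · rintro _ ⟨n, rfl⟩
    exact partialSums_Iio_le hf hs hT n
  · refine (isLUB_hasSum hf hT).2 ?_
    rintro _ ⟨F, rfl⟩
    obtain ⟨M, hM⟩ := F.exists_le
    exact (sum_le_partialSums_Iio hf hs F fun i hi => Int.lt_add_one_iff.2 (hM i hi)).trans
      (hu ⟨M + 1, rfl⟩)

end NonnegPartialSums

section Ratios

variable {ℓ : ℤ → ℝ} (hne : ∀ n, ℓ n ≠ 0)
  (hratio : Tendsto (fun n => ℓ n / ℓ (n + 1)) atTop (𝓝 1))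
include hne hratio

theorem tendsto_div_add_const (N : ℤ) :
    Tendsto (fun n => ℓ (n + N) / ℓ n) atTop (𝓝 1) := by
  induction N using Int.induction_on with
  | zero => simp [hne]
  | succ N ih =>
    have hstep : Tendsto (fun n => ℓ (n + N + 1) / ℓ (n + N)) atTop (𝓝 1) := by
      simpa using (hratio.comp (tendsto_atTop_add_const_right _ (N : ℤ) tendsto_id)).inv₀
        one_ne_zero
    refine Tendsto.congr (fun n => ?_) (by simpa using hstep.mul ih)
    rw [← add_assoc]
    field_simp [hne]
  | pred N ih =>
    have hstep : Tendsto (fun n => ℓ (n + -N - 1) / ℓ (n + -N)) atTop (𝓝 1) := by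
      refine (hratio.comp (tendsto_atTop_add_const_right _ (-(N : ℤ) - 1) tendsto_id)).congr
        fun n => ?_
      simp only [Function.comp_apply, id, ← add_sub_assoc, sub_add_cancel]
    refine Tendsto.congr (fun n => ?_) (by simpa using hstep.mul ih)
    rw [← add_sub_assoc]
    field_simp [hne]

end Ratios

theorem not_exists_tendsto_div_add_const_of_even_odd {ℓ lb : ℤ → ℝ}
    (hne : ∀ n, ℓ n ≠ 0) (hratio : Tendsto (fun n => ℓ n / ℓ (n + 1)) atTop (𝓝 1))
    {a b : ℝ} (hab : a ≠ b) (heven : ∀ k, lb (2 * k) = a * ℓ (2 * k))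
    (hodd : ∀ k, lb (2 * k + 1) = b * ℓ (2 * k + 1)) (N : ℤ) :
    ¬ ∃ L, Tendsto (fun n => lb (n + N) / ℓ n) atTop (𝓝 L) := by
  rintro ⟨L, hL⟩
  have along (r : ℤ) (c : ℝ) (hc : ∀ k, lb (2 * k + r) = c * ℓ (2 * k + r)) : L = c := by
    have hu : Tendsto (fun k : ℤ => 2 * k + (r - N)) atTop atTop :=
      tendsto_atTop_add_const_right _ _ (tendsto_id.const_mul_atTop' two_pos)
    refine tendsto_nhds_unique (hL.comp hu) (Tendsto.congr (fun k => ?_)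
      (by simpa using ((tendsto_div_add_const hne hratio N).comp hu).const_mul c))
    simp only [Function.comp_apply]
    rw [show 2 * k + (r - N) + N = 2 * k + r by ring, hc, mul_div_assoc]
  exact hab ((along 0 a (by simpa using heven)).symm.trans (along 1 b hodd))

theorem MonotoneOn.eq_of_image_Icc_eq_Icc {φ : ℝ → ℝ} {a b c d : ℝ} (hab : a ≤ b)
    (hφ : MonotoneOn φ (Icc a b)) (himg : φ '' Icc a b = Icc c d) : φ a = c ∧ φ b = d := by
  have hcd : c ≤ d := nonempty_Icc.1 (himg ▸ (nonempty_Icc.2 hab).image φ)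
  refine ⟨(hφ.map_isLeast (isLeast_Icc hab)).unique ?_,
    (hφ.map_isGreatest (isGreatest_Icc hab)).unique ?_⟩
  · exact himg ▸ isLeast_Icc hcd
  · exact himg ▸ isGreatest_Icc hcd

theorem ContDiffOn.tendsto_slope_derivWithin_Icc {ι : Type*} {l : Filter ι} {φ : ℝ → ℝ}
    {a b p : ℝ} (hab : a < b) (hφ : ContDiffOn ℝ 1 φ (Icc a b)) (hp : p ∈ Icc a b)
    {s t : ι → ℝ} (hst : ∀ i, s i < t i) (has : ∀ i, a ≤ s i) (htb : ∀ i, t i ≤ b)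
    (hs : Tendsto s l (𝓝 p)) (ht : Tendsto t l (𝓝 p)) :
    Tendsto (fun i => (φ (t i) - φ (s i)) / (t i - s i)) l
      (𝓝 (derivWithin φ (Icc a b) p)) := by
  have hderiv : ∀ x ∈ Ioo a b, HasDerivAt φ (derivWithin φ (Icc a b) x) x := fun x hx => by
    have hmem : Icc a b ∈ 𝓝 x := Icc_mem_nhds hx.1 hx.2
    rw [derivWithin_of_mem_nhds hmem]
    exact ((hφ.differentiableOn one_ne_zero x (Ioo_subset_Icc_self hx)).differentiableAt
      hmem).hasDerivAt
  have hmvt : ∀ i, ∃ ξ ∈ Ioo (s i) (t i),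
      derivWithin φ (Icc a b) ξ = (φ (t i) - φ (s i)) / (t i - s i) := fun i =>
    exists_hasDerivAt_eq_slope φ _ (hst i)
      (hφ.continuousOn.mono (Icc_subset_Icc (has i) (htb i)))
      fun x hx => hderiv x ⟨(has i).trans_lt hx.1, hx.2.trans_le (htb i)⟩
  choose ξ hξ hξslope using hmvt
  have hξp : Tendsto ξ l (𝓝[Icc a b] p) :=
    tendsto_nhdsWithin_iff.2 ⟨tendsto_of_tendsto_of_tendsto_of_le_of_le hs ht
      (fun i => (hξ i).1.le) (fun i => (hξ i).2.le),
      Eventually.of_forall fun i => ⟨(has i).trans (hξ i).1.le, (hξ i).2.le.trans (htb i)⟩⟩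
  exact ((hφ.continuousOn_derivWithin (uniqueDiffOn_Icc hab) le_rfl p hp).tendsto.comp
    hξp).congr hξslope

theorem stmt15_general (ℓ lb : ℤ → ℝ) (hpos : ∀ n : ℤ, 0 < ℓ n)
    (hsum : HasSum ℓ 1)
    (hratio : Tendsto (fun n : ℤ => ℓ n / ℓ (n + 1)) atTop (nhds 1))
    (hlb : ∀ n : ℤ, lb (2 * n) = 4 * ℓ (2 * n) / 3 ∧ lb (2 * n + 1) = 2 * ℓ (2 * n + 1) / 3)
    (S Sb : ℤ → ℝ)
    (hS : ∀ n : ℤ, HasSum (fun i : {i : ℤ // i < n} => ℓ i.1) (S n))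
    (hSb : ∀ n : ℤ, HasSum (fun i : {i : ℤ // i < n} => lb i.1) (Sb n)) :
    (∀ N : ℤ, ¬ ∃ L : ℝ, Tendsto (fun n : ℤ => lb (n + N) / ℓ n) atTop (nhds L)) ∧
      ∀ N : ℤ, ¬ ∃ φ : ℝ → ℝ, ContDiffOn ℝ 1 φ (Set.Icc 0 1) ∧
        StrictMonoOn φ (Set.Icc 0 1) ∧ φ 0 = 0 ∧ φ 1 = 1 ∧
        φ '' Set.Icc 0 1 = Set.Icc 0 1 ∧
        (∀ x ∈ Set.Icc (0:ℝ) 1, 0 < derivWithin φ (Set.Icc 0 1) x) ∧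
        ∀ n : ℤ, φ '' Set.Icc (S n) (S (n + 1)) = Set.Icc (Sb (n + N)) (Sb (n + N + 1)) := by
  have hnolimit : ∀ N : ℤ, ¬ ∃ L, Tendsto (fun n => lb (n + N) / ℓ n) atTop (𝓝 L) :=
    not_exists_tendsto_div_add_const_of_even_odd (fun n => (hpos n).ne') hratio
      (a := 4 / 3) (b := 2 / 3) (by norm_num)
      (fun k => by rw [(hlb k).1]; ring) (fun k => by rw [(hlb k).2]; ring)
  refine ⟨hnolimit, ?_⟩
  rintro N ⟨φ, hφ, hmono, -, -, -, -, himg⟩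
  have hℓ : ∀ i, 0 ≤ ℓ i := fun i => (hpos i).le
  have hS_nonneg : ∀ n, 0 ≤ S n := fun n => (hS n).nonneg fun _ => hℓ _
  have hS_le : ∀ n, S n ≤ 1 := partialSums_Iio_le hℓ hS hsum
  have hS_lt : ∀ n, S n < S (n + 1) := fun n => by
    linarith [partialSums_Iio_add_one hS n, hpos n]
  have hS_tendsto : Tendsto S atTop (𝓝 1) := tendsto_partialSums_Iio hℓ hS hsum
  have hend : ∀ n, φ (S n) = Sb (n + N) ∧ φ (S (n + 1)) = Sb (n + N + 1) := fun n =>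
    (hmono.monotoneOn.mono (Icc_subset_Icc (hS_nonneg n) (hS_le (n + 1)))
      ).eq_of_image_Icc_eq_Icc (hS_lt n).le (himg n)
  refine hnolimit N ⟨_, (hφ.tendsto_slope_derivWithin_Icc zero_lt_one
    (right_mem_Icc.2 zero_le_one) hS_lt hS_nonneg (fun n => hS_le (n + 1)) hS_tendsto
    (hS_tendsto.comp (tendsto_atTop_add_const_right _ 1 tendsto_id))).congr fun n => ?_⟩
  rw [(hend n).1, (hend n).2, partialSums_Iio_add_one hSb, partialSums_Iio_add_one hS,
    add_sub_cancel_left, add_sub_cancel_left]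

/-- With `ℓ_{2n} = ℓ_{2n+1}`, `ℓ_n/ℓ_{n+1} → 1`, `ℓ̄_{2n} = 4ℓ_{2n}/3`,
`ℓ̄_{2n+1} = 2ℓ_{2n+1}/3`: for every fixed `N ∈ ℤ` the ratios `ℓ̄_{n+N}/ℓ_n` do not
converge as `n → ∞` (they oscillate between `4/3` and `2/3`); consequently there is no
`C¹` diffeomorphism `φ` of `[0,1]` mapping each `I_n = [S n, S (n+1)]` onto
`Ī_{n+N} = [S̄ (n+N), S̄ (n+N+1)]`. -/
theorem stmt15 (ℓ lb : ℤ → ℝ) (hpos : ∀ n : ℤ, 0 < ℓ n)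
    (hsum : HasSum ℓ 1)
    (heq : ∀ n : ℤ, ℓ (2 * n) = ℓ (2 * n + 1))
    (hratio : Tendsto (fun n : ℤ => ℓ n / ℓ (n + 1)) atTop (nhds 1))
    (hlb : ∀ n : ℤ, lb (2 * n) = 4 * ℓ (2 * n) / 3 ∧ lb (2 * n + 1) = 2 * ℓ (2 * n + 1) / 3)
    (S Sb : ℤ → ℝ)
    (hS : ∀ n : ℤ, HasSum (fun i : {i : ℤ // i < n} => ℓ i.1) (S n))
    (hSb : ∀ n : ℤ, HasSum (fun i : {i : ℤ // i < n} => lb i.1) (Sb n)) :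
    (∀ N : ℤ, ¬ ∃ L : ℝ, Tendsto (fun n : ℤ => lb (n + N) / ℓ n) atTop (nhds L)) ∧
      ∀ N : ℤ, ¬ ∃ φ : ℝ → ℝ, ContDiffOn ℝ 1 φ (Set.Icc 0 1) ∧
        StrictMonoOn φ (Set.Icc 0 1) ∧ φ 0 = 0 ∧ φ 1 = 1 ∧
        φ '' Set.Icc 0 1 = Set.Icc 0 1 ∧
        (∀ x ∈ Set.Icc (0:ℝ) 1, 0 < derivWithin φ (Set.Icc 0 1) x) ∧
        ∀ n : ℤ, φ '' Set.Icc (S n) (S (n + 1)) = Set.Icc (Sb (n + N)) (Sb (n + N + 1)) :=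
  stmt15_general ℓ lb hpos hsum hratio hlb S Sb hS hSb
end

section
/- Let f be a homeomorphism of [a, b] fixing a and b with f(x) < x for all x ∈ (a, b), and fix c ∈ (a, b). Then the intervals fⁿ([f(c), c]), n ∈ ℤ, cover (a, b) and have pairwise disjoint interiors; consequently, every self-homeomorphism h of [f(c), c] fixing f(c) and c extends uniquely to a homeomorphism of [a, b] fixing a and b that commutes with f. -/
/-!
The half-open interval `(f c, c]` is a strict fundamental domain for the action of `f` on
`(a, b)`. Orbits `n ↦ fⁿ x` are antitone, and an orbit staying on one side of `c` would have an
infimum or supremum over `ℤ` in `(a, b)`; since the order isomorphism `f` commutes with these,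
that point would be fixed by `f`, which is impossible. So exactly one `fⁿ x` lies in `(f c, c]`.
Conjugating `h` by this power of `f`, and taking the identity outside `(a, b)`, gives a strictly
monotone surjection of the line commuting with `f`, hence a homeomorphism. Any other equivariant
extension agrees with it on the fundamental domain, hence on every translate of it.
-/

open Set

theorem Set.InjOn.image_Ioc_eq_of_image_Icc_eq {α : Type*} [LinearOrder α] {h : α → α}
    {p q : α} (hinj : InjOn h (Icc p q)) (hpq : p ≤ q) (himg : h '' Icc p q = Icc p q)
    (hp : h p = p) :
    h '' Ioc p q = Ioc p q := by
  rw [← Icc_sdiff_left, hinj.image_sdiff_subset (singleton_subset_iff.2 (left_mem_Icc.2 hpq)),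
    image_singleton, hp, himg]

namespace Equiv.Perm

variable {α : Type*}

theorem apply_zpow_apply_of_mapsTo {f : Perm α} {H : α → α} {s : Set α}
    (hs : ∀ n : ℤ, MapsTo ⇑(f ^ n) s s) (hH : ∀ x ∈ s, H (f x) = f (H x)) (n : ℤ)
    {x : α} (hx : x ∈ s) : H ((f ^ n) x) = (f ^ n) (H x) := by
  induction n using Int.induction_on with
  | zero => simp
  | succ n ih => rw [add_comm, zpow_one_add, mul_apply, mul_apply, hH _ (hs n hx), ih]
  | pred n ih =>
    apply f.injective
    rw [← hH _ (hs _ hx), ← mul_apply, ← mul_apply, ← zpow_one_add, add_sub_cancel, ih]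

section LinearOrder

variable [LinearOrder α] {f : Perm α}

theorem strictMono_zpow (hf : StrictMono f) (n : ℤ) : StrictMono ⇑(f ^ n) := by
  induction n using Int.induction_on with
  | zero => exact strictMono_id
  | succ n ih => rw [zpow_add_one]; exact ih.comp hf
  | pred n ih =>
    rw [zpow_sub_one]
    exact ih.comp fun x y hxy => hf.lt_iff_lt.1 (by simpa using hxy)

theorem image_zpow_Icc (hf : StrictMono f) (n : ℤ) (p q : α) :
    (f ^ n) '' Icc p q = Icc ((f ^ n) p) ((f ^ n) q) :=
  ((strictMono_zpow hf n).orderIsoOfSurjective _ (f ^ n).surjective).image_Icc p q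

theorem image_zpow_Ioo (hf : StrictMono f) (n : ℤ) (p q : α) :
    (f ^ n) '' Ioo p q = Ioo ((f ^ n) p) ((f ^ n) q) :=
  ((strictMono_zpow hf n).orderIsoOfSurjective _ (f ^ n).surjective).image_Ioo p q

structure IsDescendingOn (f : Perm α) (a b : α) : Prop where
  strictMono : StrictMono f
  apply_left : f a = a
  apply_right : f b = b
  apply_lt : ∀ x ∈ Ioo a b, f x < x

namespace IsDescendingOn

variable {a b c x y : α} {m n : ℤ}

theorem image_zpow_Ioo_eq (hf : f.IsDescendingOn a b) (n : ℤ) :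
    (f ^ n) '' Ioo a b = Ioo a b := by
  rw [image_zpow_Ioo hf.strictMono, zpow_apply_eq_self_of_apply_eq_self hf.apply_left,
    zpow_apply_eq_self_of_apply_eq_self hf.apply_right]

theorem mapsTo_zpow_Icc (hf : f.IsDescendingOn a b) (n : ℤ) :
    MapsTo ⇑(f ^ n) (Icc a b) (Icc a b) := by
  rw [mapsTo_iff_image_subset, image_zpow_Icc hf.strictMono,
    zpow_apply_eq_self_of_apply_eq_self hf.apply_left,
    zpow_apply_eq_self_of_apply_eq_self hf.apply_right]

theorem zpow_apply_mem_Ioo_iff (hf : f.IsDescendingOn a b) (n : ℤ) :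
    (f ^ n) x ∈ Ioo a b ↔ x ∈ Ioo a b := by
  conv_lhs => rw [← hf.image_zpow_Ioo_eq n]
  exact (f ^ n).injective.mem_set_image

theorem antitone_zpow_apply (hf : f.IsDescendingOn a b) (hx : x ∈ Ioo a b) :
    Antitone fun n : ℤ => (f ^ n) x :=
  antitone_int_of_succ_le fun n => by
    rw [add_comm, zpow_one_add, mul_apply]
    exact (hf.apply_lt _ ((hf.zpow_apply_mem_Ioo_iff n).2 hx)).le

theorem Ioc_subset_Ioo (hf : f.IsDescendingOn a b) (hc : c ∈ Ioo a b) :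
    Ioc (f c) c ⊆ Ioo a b := by
  have hfc : f c ∈ Ioo a b := by simpa using (hf.zpow_apply_mem_Ioo_iff 1).2 hc
  exact fun y hy => ⟨hfc.1.trans hy.1, hy.2.trans_lt hc.2⟩

theorem lt_of_zpow_apply_mem_Ioc (hf : f.IsDescendingOn a b) (hc : c ∈ Ioo a b)
    (hx : (f ^ m) x ∈ Ioc (f c) c) (hy : (f ^ n) y ∈ Ioc (f c) c) (hmn : m < n) : x < y := by
  have hx' : x ∈ Ioo a b := (hf.zpow_apply_mem_Ioo_iff m).1 (hf.Ioc_subset_Ioo hc hx)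
  refine (strictMono_zpow hf.strictMono n).lt_iff_lt.1 ?_
  calc (f ^ n) x ≤ (f ^ (1 + m)) x := hf.antitone_zpow_apply hx' (by omega)
    _ = f ((f ^ m) x) := by rw [zpow_one_add, mul_apply]
    _ ≤ f c := hf.strictMono.monotone hx.2
    _ < (f ^ n) y := hy.1

theorem eq_of_zpow_apply_mem_Ioc (hf : f.IsDescendingOn a b) (hc : c ∈ Ioo a b)
    (hm : (f ^ m) x ∈ Ioc (f c) c) (hn : (f ^ n) x ∈ Ioc (f c) c) : m = n := by
  rcases lt_trichotomy m n with hmn | hmn | hmn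
  · exact absurd (hf.lt_of_zpow_apply_mem_Ioc hc hm hn hmn) (lt_irrefl x)
  · exact hmn
  · exact absurd (hf.lt_of_zpow_apply_mem_Ioc hc hn hm hmn) (lt_irrefl x)

theorem disjoint_image_zpow_Ioo (hf : f.IsDescendingOn a b) (hc : c ∈ Ioo a b) (hmn : m ≠ n) :
    _root_.Disjoint ((f ^ m) '' Ioo (f c) c) ((f ^ n) '' Ioo (f c) c) := by
  refine disjoint_left.2 ?_
  rintro _ ⟨x, hx, rfl⟩ ⟨y, hy, hxy⟩
  have hm : (f ^ (-m)) ((f ^ m) x) ∈ Ioc (f c) c := by simpa using Ioo_subset_Ioc_self hx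
  have hn : (f ^ (-n)) ((f ^ m) x) ∈ Ioc (f c) c := by
    rw [← hxy]; simpa using Ioo_subset_Ioc_self hy
  exact hmn (neg_inj.1 (hf.eq_of_zpow_apply_mem_Ioc hc hm hn))

end IsDescendingOn

open Classical in
noncomputable def equivariantExtension (f : Perm α) (c : α) (h : α → α) (x : α) : α :=
  if hx : ∃ n : ℤ, (f ^ n) x ∈ Ioc (f c) c then
    (f ^ (-hx.choose)) (h ((f ^ hx.choose) x))
  else x

namespace IsDescendingOn

variable {a b c x : α} {n : ℤ} {h : α → α}

theorem equivariantExtension_eq (hf : f.IsDescendingOn a b) (hc : c ∈ Ioo a b)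
    (hn : (f ^ n) x ∈ Ioc (f c) c) :
    f.equivariantExtension c h x = (f ^ (-n)) (h ((f ^ n) x)) := by
  have hx : ∃ n : ℤ, (f ^ n) x ∈ Ioc (f c) c := ⟨n, hn⟩
  rw [equivariantExtension, dif_pos hx, hf.eq_of_zpow_apply_mem_Ioc hc hx.choose_spec hn]

theorem zpow_equivariantExtension (hf : f.IsDescendingOn a b) (hc : c ∈ Ioo a b)
    (hn : (f ^ n) x ∈ Ioc (f c) c) :
    (f ^ n) (f.equivariantExtension c h x) = h ((f ^ n) x) := by
  simp [hf.equivariantExtension_eq hc hn]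

theorem equivariantExtension_of_notMem (hf : f.IsDescendingOn a b) (hc : c ∈ Ioo a b)
    (hx : x ∉ Ioo a b) : f.equivariantExtension c h x = x :=
  dif_neg fun ⟨n, hn⟩ => hx ((hf.zpow_apply_mem_Ioo_iff n).1 (hf.Ioc_subset_Ioo hc hn))

theorem equivariantExtension_apply (hf : f.IsDescendingOn a b) (hc : c ∈ Ioo a b) (x : α) :
    f.equivariantExtension c h (f x) = f (f.equivariantExtension c h x) := by
  by_cases hx : ∃ n : ℤ, (f ^ n) x ∈ Ioc (f c) c
  · obtain ⟨n, hn⟩ := hx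
    have hshift : (f ^ (n - 1)) (f x) = (f ^ n) x := by
      rw [← mul_apply, ← zpow_add_one, sub_add_cancel]
    rw [hf.equivariantExtension_eq hc (hshift ▸ hn), hf.equivariantExtension_eq hc hn, hshift,
      show -(n - 1) = 1 + -n by ring, zpow_one_add, mul_apply]
  · have hfx : ¬∃ n : ℤ, (f ^ n) (f x) ∈ Ioc (f c) c := fun ⟨n, hn⟩ =>
      hx ⟨n + 1, by rwa [zpow_add_one, mul_apply]⟩
    simp only [equivariantExtension, dif_neg hx, dif_neg hfx]

theorem equivariantExtension_eqOn (hf : f.IsDescendingOn a b) (hc : c ∈ Ioo a b)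
    (hfc : h (f c) = f c) (hcc : h c = c) :
    EqOn (f.equivariantExtension c h) h (Icc (f c) c) := by
  have hD : ∀ x ∈ Ioc (f c) c, f.equivariantExtension c h x = h x := fun x hx => by
    simpa using hf.equivariantExtension_eq (n := 0) hc (by simpa using hx)
  intro x hx
  rcases hx.1.eq_or_lt with rfl | hlt
  · rw [hf.equivariantExtension_apply hc, hD c ⟨hf.apply_lt c hc, le_rfl⟩, hcc, hfc]
  · exact hD x ⟨hlt, hx.2⟩

end IsDescendingOn

end LinearOrder

section ConditionallyCompleteLinearOrder

variable [ConditionallyCompleteLinearOrder α] {f : Perm α}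

theorem apply_ciInf_zpow_apply (hf : StrictMono f) {x : α}
    (hbdd : BddBelow (range fun n : ℤ => (f ^ n) x)) :
    f (⨅ n : ℤ, (f ^ n) x) = ⨅ n : ℤ, (f ^ n) x :=
  calc f (⨅ n : ℤ, (f ^ n) x) = ⨅ n : ℤ, f ((f ^ n) x) :=
        (hf.orderIsoOfSurjective f f.surjective).map_ciInf hbdd
    _ = ⨅ n : ℤ, (f ^ (1 + n)) x := by simp only [zpow_one_add, mul_apply]
    _ = ⨅ n : ℤ, (f ^ n) x := (Equiv.addLeft 1).iInf_comp (g := fun n => (f ^ n) x)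

theorem apply_ciSup_zpow_apply (hf : StrictMono f) {x : α}
    (hbdd : BddAbove (range fun n : ℤ => (f ^ n) x)) :
    f (⨆ n : ℤ, (f ^ n) x) = ⨆ n : ℤ, (f ^ n) x :=
  calc f (⨆ n : ℤ, (f ^ n) x) = ⨆ n : ℤ, f ((f ^ n) x) :=
        (hf.orderIsoOfSurjective f f.surjective).map_ciSup hbdd
    _ = ⨆ n : ℤ, (f ^ (1 + n)) x := by simp only [zpow_one_add, mul_apply]
    _ = ⨆ n : ℤ, (f ^ n) x := (Equiv.addLeft 1).iSup_comp (g := fun n => (f ^ n) x)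

namespace IsDescendingOn

variable {a b c x : α}

theorem exists_zpow_apply_le (hf : f.IsDescendingOn a b) (hc : c ∈ Ioo a b)
    (hx : x ∈ Ioo a b) : ∃ n : ℤ, (f ^ n) x ≤ c := by
  by_contra! h
  have hbdd : BddBelow (range fun n : ℤ => (f ^ n) x) :=
    ⟨c, forall_mem_range.2 fun n => (h n).le⟩
  have hmem : ⨅ n : ℤ, (f ^ n) x ∈ Ioo a b :=
    ⟨hc.1.trans_le (le_ciInf fun n => (h n).le),
      (ciInf_le hbdd 0).trans_lt (by simpa using hx.2)⟩
  exact (hf.apply_lt _ hmem).ne (apply_ciInf_zpow_apply hf.strictMono hbdd)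

theorem exists_lt_zpow_apply (hf : f.IsDescendingOn a b) (hc : c ∈ Ioo a b)
    (hx : x ∈ Ioo a b) : ∃ n : ℤ, c < (f ^ n) x := by
  by_contra! h
  have hbdd : BddAbove (range fun n : ℤ => (f ^ n) x) := ⟨c, forall_mem_range.2 h⟩
  have hmem : ⨆ n : ℤ, (f ^ n) x ∈ Ioo a b :=
    ⟨(by simpa using hx.1 : a < (f ^ (0 : ℤ)) x).trans_le (le_ciSup hbdd 0),
      (ciSup_le h).trans_lt hc.2⟩
  exact (hf.apply_lt _ hmem).ne (apply_ciSup_zpow_apply hf.strictMono hbdd)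

theorem exists_zpow_apply_mem_Ioc (hf : f.IsDescendingOn a b) (hc : c ∈ Ioo a b)
    (hx : x ∈ Ioo a b) : ∃ n : ℤ, (f ^ n) x ∈ Ioc (f c) c := by
  obtain ⟨k, hk⟩ := hf.exists_lt_zpow_apply hc hx
  have hbdd : ∃ k : ℤ, ∀ n : ℤ, (f ^ n) x ≤ c → k ≤ n := ⟨k, fun n hn =>
    not_lt.1 fun hnk => (hk.trans_le ((hf.antitone_zpow_apply hx hnk.le).trans hn)).false⟩
  obtain ⟨n, hn, hleast⟩ := Int.exists_least_of_bdd hbdd (hf.exists_zpow_apply_le hc hx)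
  have hprev : c < (f ^ (n - 1)) x := not_le.1 fun h => by linarith [hleast _ h]
  refine ⟨n, ?_, hn⟩
  calc f c < f ((f ^ (n - 1)) x) := hf.strictMono hprev
    _ = (f ^ n) x := by rw [← mul_apply, ← zpow_one_add, add_sub_cancel]

variable {h : α → α}

theorem strictMonoOn_equivariantExtension (hf : f.IsDescendingOn a b) (hc : c ∈ Ioo a b)
    (hh : StrictMonoOn h (Icc (f c) c)) (himg : h '' Ioc (f c) c = Ioc (f c) c) :
    StrictMonoOn (f.equivariantExtension c h) (Ioo a b) := by
  have hmaps {n : ℤ} {x : α} (hn : (f ^ n) x ∈ Ioc (f c) c) :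
      (f ^ n) (f.equivariantExtension c h x) ∈ Ioc (f c) c := by
    rw [hf.zpow_equivariantExtension hc hn, ← himg]
    exact mem_image_of_mem h hn
  intro x hx y hy hxy
  obtain ⟨m, hm⟩ := hf.exists_zpow_apply_mem_Ioc hc hx
  obtain ⟨n, hn⟩ := hf.exists_zpow_apply_mem_Ioc hc hy
  rcases lt_trichotomy m n with hmn | rfl | hmn
  · exact hf.lt_of_zpow_apply_mem_Ioc hc (hmaps hm) (hmaps hn) hmn
  · refine (strictMono_zpow hf.strictMono m).lt_iff_lt.1 ?_
    rw [hf.zpow_equivariantExtension hc hm, hf.zpow_equivariantExtension hc hn]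
    exact hh (Ioc_subset_Icc_self hm) (Ioc_subset_Icc_self hn)
      (strictMono_zpow hf.strictMono m hxy)
  · exact absurd hxy (hf.lt_of_zpow_apply_mem_Ioc hc hn hm hmn).asymm

theorem mapsTo_equivariantExtension (hf : f.IsDescendingOn a b) (hc : c ∈ Ioo a b)
    (himg : h '' Ioc (f c) c = Ioc (f c) c) :
    MapsTo (f.equivariantExtension c h) (Ioo a b) (Ioo a b) := by
  intro x hx
  obtain ⟨n, hn⟩ := hf.exists_zpow_apply_mem_Ioc hc hx
  refine (hf.zpow_apply_mem_Ioo_iff n).1 (hf.Ioc_subset_Ioo hc ?_)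
  rw [hf.zpow_equivariantExtension hc hn, ← himg]
  exact mem_image_of_mem h hn

theorem strictMono_equivariantExtension (hf : f.IsDescendingOn a b) (hc : c ∈ Ioo a b)
    (hh : StrictMonoOn h (Icc (f c) c)) (himg : h '' Ioc (f c) c = Ioc (f c) c) :
    StrictMono (f.equivariantExtension c h) := by
  have hIoo := hf.mapsTo_equivariantExtension hc himg
  have hout {x : α} (hx : x ∉ Ioo a b) := hf.equivariantExtension_of_notMem (h := h) hc hx
  intro x y hxy
  by_cases hx : x ∈ Ioo a b <;> by_cases hy : y ∈ Ioo a b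
  · exact hf.strictMonoOn_equivariantExtension hc hh himg hx hy hxy
  · rw [hout hy]
    exact (hIoo hx).2.trans_le (not_lt.1 fun hyb => hy ⟨hx.1.trans hxy, hyb⟩)
  · rw [hout hx]
    exact (not_lt.1 fun hax => hx ⟨hax, hxy.trans hy.2⟩).trans_lt (hIoo hy).1
  · rwa [hout hx, hout hy]

theorem surjective_equivariantExtension (hf : f.IsDescendingOn a b) (hc : c ∈ Ioo a b)
    (himg : h '' Ioc (f c) c = Ioc (f c) c) :
    Function.Surjective (f.equivariantExtension c h) := by
  intro y
  by_cases hy : y ∈ Ioo a b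
  · obtain ⟨n, hn⟩ := hf.exists_zpow_apply_mem_Ioc hc hy
    obtain ⟨u, hu, hhu⟩ := himg.symm.subset hn
    have hu' : (f ^ n) ((f ^ (-n)) u) ∈ Ioc (f c) c := by simpa using hu
    refine ⟨(f ^ (-n)) u, ?_⟩
    rw [hf.equivariantExtension_eq hc hu']
    simp [hhu]
  · exact ⟨y, hf.equivariantExtension_of_notMem hc hy⟩

theorem eqOn_Icc_of_eqOn_Ioc (hf : f.IsDescendingOn a b) (hc : c ∈ Ioo a b) {H₁ H₂ : α → α}
    (ha : H₁ a = H₂ a) (hb : H₁ b = H₂ b) (hD : EqOn H₁ H₂ (Ioc (f c) c))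
    (h₁ : ∀ x ∈ Icc a b, H₁ (f x) = f (H₁ x)) (h₂ : ∀ x ∈ Icc a b, H₂ (f x) = f (H₂ x)) :
    EqOn H₁ H₂ (Icc a b) := by
  intro x hx
  rcases eq_endpoints_or_mem_Ioo_of_mem_Icc hx with rfl | rfl | hx'
  · exact ha
  · exact hb
  · obtain ⟨n, hn⟩ := hf.exists_zpow_apply_mem_Ioc hc hx'
    apply (f ^ n).injective
    rw [← apply_zpow_apply_of_mapsTo hf.mapsTo_zpow_Icc h₁ n hx,
      ← apply_zpow_apply_of_mapsTo hf.mapsTo_zpow_Icc h₂ n hx, hD hn]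

end IsDescendingOn

end ConditionallyCompleteLinearOrder

end Equiv.Perm

theorem stmt16_general (a b c : ℝ) (hc : c ∈ Set.Ioo a b)
    (f : Equiv.Perm ℝ)
    (hf_mono : StrictMono f) (hfa : f a = a) (hfb : f b = b)
    (hcontract : ∀ x ∈ Set.Ioo a b, f x < x) :
    (Set.Ioo a b ⊆ ⋃ n : ℤ, (f ^ n) '' Set.Icc (f c) c) ∧
    (∀ m n : ℤ, m ≠ n →
      Disjoint (interior ((f ^ m) '' Set.Icc (f c) c))
        (interior ((f ^ n) '' Set.Icc (f c) c))) ∧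
    ∀ h : ℝ → ℝ, ContinuousOn h (Set.Icc (f c) c) → StrictMonoOn h (Set.Icc (f c) c) →
      h (f c) = f c → h c = c → h '' Set.Icc (f c) c = Set.Icc (f c) c →
      ∃ H : ℝ → ℝ,
        (ContinuousOn H (Set.Icc a b) ∧ StrictMonoOn H (Set.Icc a b) ∧
          H a = a ∧ H b = b ∧ H '' Set.Icc a b = Set.Icc a b ∧
          (∀ x ∈ Set.Icc (f c) c, H x = h x) ∧
          ∀ x ∈ Set.Icc a b, H (f x) = f (H x)) ∧
        ∀ H' : ℝ → ℝ,
          (ContinuousOn H' (Set.Icc a b) ∧ StrictMonoOn H' (Set.Icc a b) ∧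
            H' a = a ∧ H' b = b ∧ H' '' Set.Icc a b = Set.Icc a b ∧
            (∀ x ∈ Set.Icc (f c) c, H' x = h x) ∧
            ∀ x ∈ Set.Icc a b, H' (f x) = f (H' x)) →
          Set.EqOn H H' (Set.Icc a b) := by
  have hf : f.IsDescendingOn a b := ⟨hf_mono, hfa, hfb, hcontract⟩
  refine ⟨fun x hx => ?_, fun m n hmn => ?_, fun h _ hh hfc hcc himg => ?_⟩
  · obtain ⟨n, hn⟩ := hf.exists_zpow_apply_mem_Ioc hc hx
    exact mem_iUnion.2 ⟨-n, (f ^ n) x, Ioc_subset_Icc_self hn, by simp⟩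
  · simp only [Equiv.Perm.image_zpow_Icc hf_mono, interior_Icc,
      ← Equiv.Perm.image_zpow_Ioo hf_mono]
    exact hf.disjoint_image_zpow_Ioo hc hmn
  have himg' := hh.injOn.image_Ioc_eq_of_image_Icc_eq (hf.apply_lt c hc).le himg hfc
  set H := f.equivariantExtension c h
  let E : ℝ ≃o ℝ := (hf.strictMono_equivariantExtension hc hh himg').orderIsoOfSurjective H
    (hf.surjective_equivariantExtension hc himg')
  have hHa : H a = a := hf.equivariantExtension_of_notMem hc (by simp)
  have hHb : H b = b := hf.equivariantExtension_of_notMem hc (by simp)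
  have hHh := hf.equivariantExtension_eqOn hc hfc hcc
  have hHf : ∀ x ∈ Icc a b, H (f x) = f (H x) := fun x _ => hf.equivariantExtension_apply hc x
  refine ⟨H, ⟨E.continuous.continuousOn, E.strictMono.strictMonoOn _, hHa, hHb, ?_, hHh, hHf⟩,
    fun H' ⟨_, _, hH'a, hH'b, _, hH'h, hH'f⟩ => ?_⟩
  · simpa [E, hHa, hHb] using E.image_Icc a b
  · exact hf.eqOn_Icc_of_eqOn_Ioc hc (hHa.trans hH'a.symm) (hHb.trans hH'b.symm)
      (fun x hx => (hHh (Ioc_subset_Icc_self hx)).trans (hH'h x (Ioc_subset_Icc_self hx)).symm)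
      hHf hH'f

/-- Let `f` be an (orientation-preserving) homeomorphism of the line fixing `a < b` with
`f x < x` on `(a,b)`, and let `c ∈ (a,b)`. Then the intervals `fⁿ([f c, c])`, `n ∈ ℤ`,
cover `(a,b)` and have pairwise disjoint interiors; consequently every self-homeomorphism
`h` of the fundamental domain `[f c, c]` fixing its endpoints extends uniquely to a
homeomorphism `H` of `[a,b]` fixing `a` and `b` and commuting with `f`. -/
theorem stmt16 (a b c : ℝ) (hab : a < b) (hc : c ∈ Set.Ioo a b)
    (f : Equiv.Perm ℝ) (hf_cont : Continuous f) (hf_cont' : Continuous f.symm)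
    (hf_mono : StrictMono f) (hfa : f a = a) (hfb : f b = b)
    (hcontract : ∀ x ∈ Set.Ioo a b, f x < x) :
    (Set.Ioo a b ⊆ ⋃ n : ℤ, (f ^ n) '' Set.Icc (f c) c) ∧
    (∀ m n : ℤ, m ≠ n →
      Disjoint (interior ((f ^ m) '' Set.Icc (f c) c))
        (interior ((f ^ n) '' Set.Icc (f c) c))) ∧
    ∀ h : ℝ → ℝ, ContinuousOn h (Set.Icc (f c) c) → StrictMonoOn h (Set.Icc (f c) c) →
      h (f c) = f c → h c = c → h '' Set.Icc (f c) c = Set.Icc (f c) c →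
      ∃ H : ℝ → ℝ,
        (ContinuousOn H (Set.Icc a b) ∧ StrictMonoOn H (Set.Icc a b) ∧
          H a = a ∧ H b = b ∧ H '' Set.Icc a b = Set.Icc a b ∧
          (∀ x ∈ Set.Icc (f c) c, H x = h x) ∧
          ∀ x ∈ Set.Icc a b, H (f x) = f (H x)) ∧
        ∀ H' : ℝ → ℝ,
          (ContinuousOn H' (Set.Icc a b) ∧ StrictMonoOn H' (Set.Icc a b) ∧
            H' a = a ∧ H' b = b ∧ H' '' Set.Icc a b = Set.Icc a b ∧
            (∀ x ∈ Set.Icc (f c) c, H' x = h x) ∧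
            ∀ x ∈ Set.Icc a b, H' (f x) = f (H' x)) →
          Set.EqOn H H' (Set.Icc a b) :=
  stmt16_general a b c hc f hf_mono hfa hfb hcontract
end
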